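/- arXiv:1901.01135 — 8 statements merged into one kernel-verified Lean document; each statement's English description precedes it below -/
import Mathlib

section
/- Let A ∈ ℤ^{m×n} be an integer matrix where every entry of A is bounded by Δ in absolute value. Then every Graver element g of A satisfies ‖g‖_1 ≤ (2mΔ + 1)^m. -/
/-!
Write `g` as a sum of `‖g‖₁` signed unit vectors `± eᵢ`; their images under `A` are vectors
with entries in `[-Δ, Δ]` that sum to zero. A Steinitz-type argument orders them so that every
prefix sum has sup-norm at most `mΔ`. Call a set `S` of the vectors balanced if weights
`μ ∈ [0,1]^S` of total mass `|S| - m` cancel them; then `∑_S v = ∑_S (1 - μ) v` has norm at most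
`mΔ`. A vertex of the polytope of cancelling weights of mass `|S| - m - 1` has at most `m + 1`
fractional coordinates, hence a zero one, and removing that vector keeps the set balanced.
If `‖g‖₁ > (2mΔ+1)^m`, two of the `‖g‖₁` nonempty prefix sums coincide by pigeonhole, and the
unit vectors in between form a nonzero cycle that is sign-compatible with `g`.
-/

open Finset
open scoped Matrix

def IsGraver {R C : Type*} [Fintype R] [Fintype C]
    (A : Matrix R C ℤ) (g : C → ℤ) : Prop :=
  g ≠ 0 ∧ A.mulVec g = 0 ∧
    ¬ ∃ u v : C → ℤ, u ≠ 0 ∧ v ≠ 0 ∧ A.mulVec u = 0 ∧ A.mulVec v = 0 ∧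
        g = u + v ∧ ∀ i, 0 ≤ u i * v i

lemma Finset.exists_monotone_chain {α : Type*} [DecidableEq α] (P : Finset α → Prop)
    (hP : ∀ S, P S → S.Nonempty → ∃ x ∈ S, P (S.erase x)) {S : Finset α} (hS : P S) :
    ∃ C : ℕ → Finset α, Monotone C ∧ (∀ k, C k ⊆ S ∧ P (C k)) ∧ ∀ k ≤ #S, #(C k) = k := by
  induction h : #S generalizing S with
  | zero =>
    exact ⟨fun _ ↦ S, monotone_const, fun _ ↦ ⟨subset_rfl, hS⟩, fun k hk ↦ by simp only; omega⟩
  | succ n ih =>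
    obtain ⟨x, hx, hPx⟩ := hP S hS (card_pos.mp (by omega))
    obtain ⟨C, hmono, hC, hcard⟩ := ih hPx (by rw [card_erase_of_mem hx, h]; rfl)
    have hCS : ∀ k, C k ⊆ S := fun k ↦ (hC k).1.trans (erase_subset x S)
    refine ⟨fun k ↦ if k ≤ n then C k else S, fun a b hab ↦ ?_, fun k ↦ ?_, fun k hk ↦ ?_⟩
    · dsimp only
      split_ifs with ha hb hb
      exacts [hmono hab, hCS a, by omega, subset_rfl]
    · dsimp only
      split_ifs
      exacts [⟨hCS k, (hC k).2⟩, ⟨subset_rfl, hS⟩]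
    · dsimp only
      split_ifs with hkn
      · exact hcard k hkn
      · omega

section Steinitz

variable {ι κ 𝕜 : Type*} [Fintype ι] [Field 𝕜]

lemma exists_nontrivial_relation_sum_zero_of_card_succ_lt_card [Fintype κ] (v : ι → κ → 𝕜)
    {F : Finset ι} (hF : Fintype.card κ + 1 < #F) :
    ∃ d : ι → 𝕜, (∀ x ∉ F, d x = 0) ∧ ∑ x, d x = 0 ∧ ∑ x, d x • v x = 0 ∧ ∃ x ∈ F, d x ≠ 0 := by
  classical
  have hdep : ¬ AffineIndependent 𝕜 (fun x : F ↦ v x) := fun h ↦ by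
    have := h.card_le_finrank_succ.trans
      (Nat.add_le_add_right (Submodule.finrank_le (vectorSpan 𝕜 _)) 1)
    simp at this
    omega
  simp only [affineIndependent_iff, not_forall] at hdep
  obtain ⟨s, w, hw, hwv, y, hy, hwy⟩ := hdep
  refine ⟨fun x ↦ if h : x ∈ F then (if ⟨x, h⟩ ∈ s then w ⟨x, h⟩ else 0) else 0,
    fun x hx ↦ dif_neg hx, ?_, ?_, y, y.2, by simpa [hy] using hwy⟩
  · rw [← Finset.sum_subset (subset_univ F) (fun x _ hx ↦ dif_neg hx), ← sum_coe_sort]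
    simp only [coe_mem, dif_pos, Subtype.coe_eta, sum_ite_mem, univ_inter]
    exact hw
  · rw [← Finset.sum_subset (subset_univ F) (fun x _ hx ↦ by simp [hx]), ← sum_coe_sort]
    simp only [coe_mem, dif_pos, Subtype.coe_eta, ite_smul, zero_smul, sum_ite_mem, univ_inter]
    exact hwv

variable [LinearOrder 𝕜]

/-- The time at which `a + t * d` leaves `[0, 1]` (junk value `0` when `d = 0`). -/
def boundaryTime (a d : 𝕜) : 𝕜 := if 0 < d then (1 - a) / d else -a / d

lemma add_boundaryTime_mul_eq_zero_or_one (a : 𝕜) {d : 𝕜} (hd : d ≠ 0) :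
    a + boundaryTime a d * d = 0 ∨ a + boundaryTime a d * d = 1 := by
  unfold boundaryTime
  split_ifs
  · right; field_simp; ring
  · left; field_simp; ring

structure IsBalancing (v : ι → κ → 𝕜) (S : Finset ι) (c : 𝕜) (μ : ι → 𝕜) : Prop where
  mem_Icc : ∀ x, μ x ∈ Set.Icc (0 : 𝕜) 1
  eq_zero_of_notMem : ∀ x ∉ S, μ x = 0
  sum_eq : ∑ x, μ x = c
  sum_smul_eq_zero : ∑ x, μ x • v x = 0

def fracSupport (μ : ι → 𝕜) : Finset ι := {x | μ x ≠ 0 ∧ μ x ≠ 1}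

namespace IsBalancing

variable {v : ι → κ → 𝕜} {S : Finset ι} {c : 𝕜} {μ : ι → 𝕜}

lemma sum_eq' (hμ : IsBalancing v S c μ) : ∑ x ∈ S, μ x = c := by
  rw [sum_subset (subset_univ S) fun x _ hx ↦ hμ.eq_zero_of_notMem x hx, hμ.sum_eq]

lemma sum_smul_eq_zero' (hμ : IsBalancing v S c μ) : ∑ x ∈ S, μ x • v x = 0 := by
  rw [sum_subset (subset_univ S) fun x _ hx ↦ by rw [hμ.eq_zero_of_notMem x hx, zero_smul],
    hμ.sum_smul_eq_zero]

end IsBalancing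

variable [IsStrictOrderedRing 𝕜]

lemma boundaryTime_nonneg {a : 𝕜} (ha : a ∈ Set.Icc (0 : 𝕜) 1) (d : 𝕜) :
    0 ≤ boundaryTime a d := by
  unfold boundaryTime
  split_ifs with hd
  · exact div_nonneg (by linarith [ha.2]) hd.le
  · exact div_nonneg_of_nonpos (by linarith [ha.1]) (not_lt.mp hd)

lemma add_mul_mem_Icc_of_le_boundaryTime {a d t : 𝕜} (ha : a ∈ Set.Icc (0 : 𝕜) 1)
    (ht₀ : 0 ≤ t) (ht : t ≤ boundaryTime a d) : a + t * d ∈ Set.Icc (0 : 𝕜) 1 := by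
  unfold boundaryTime at ht
  obtain ⟨ha₀, ha₁⟩ := ha
  split_ifs at ht with hd
  · have := (le_div_iff₀ hd).mp ht
    constructor <;> nlinarith
  · rcases (not_lt.mp hd).lt_or_eq with hd | rfl
    · have := (le_div_iff_of_neg hd).mp ht
      constructor <;> nlinarith
    · simpa using And.intro ha₀ ha₁

namespace IsBalancing

variable {v : ι → κ → 𝕜} {S : Finset ι} {c : 𝕜} {μ : ι → 𝕜}

/-- Moving `μ` along an affine dependence of its fractional coordinates until the first of
them reaches `0` or `1`. -/
lemma exists_fracSupport_card_lt [Fintype κ] (hμ : IsBalancing v S c μ)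
    (hF : Fintype.card κ + 1 < #(fracSupport μ)) :
    ∃ μ', IsBalancing v S c μ' ∧ #(fracSupport μ') < #(fracSupport μ) := by
  obtain ⟨d, hdF, hd, hdv, hd_ne⟩ :=
    exists_nontrivial_relation_sum_zero_of_card_succ_lt_card v hF
  have hsupp : ∀ x, d x ≠ 0 → x ∈ fracSupport μ := fun x ↦ not_imp_comm.mp (hdF x)
  have hF₀ : ({x | d x ≠ 0} : Finset ι).Nonempty := by
    obtain ⟨x, -, hx⟩ := hd_ne
    exact ⟨x, by simpa using hx⟩
  obtain ⟨x₀, hx₀, hmin⟩ := exists_min_image _ (fun x ↦ boundaryTime (μ x) (d x)) hF₀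
  rw [mem_filter_univ] at hx₀
  set ε := boundaryTime (μ x₀) (d x₀)
  have hε : 0 ≤ ε := boundaryTime_nonneg (hμ.mem_Icc x₀) _
  refine ⟨μ + ε • d, ⟨fun x ↦ ?_, fun x hx ↦ ?_, ?_, ?_⟩, card_lt_card ⟨fun x hx ↦ ?_, ?_⟩⟩
  · by_cases hdx : d x = 0
    · simpa [hdx] using hμ.mem_Icc x
    · exact add_mul_mem_Icc_of_le_boundaryTime (hμ.mem_Icc x) hε
        (hmin x ((mem_filter_univ x).mpr hdx))
  · have hμx := hμ.eq_zero_of_notMem x hx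
    have hdx : d x = 0 := by_contra fun h ↦ by simpa [fracSupport, hμx] using hsupp x h
    simp [hμx, hdx]
  · simp [sum_add_distrib, ← mul_sum, hd, hμ.sum_eq]
  · simp [add_smul, mul_smul, sum_add_distrib, ← smul_sum, hdv, hμ.sum_smul_eq_zero]
  · by_cases hdx : d x = 0
    · simpa [fracSupport, hdx] using hx
    · exact hsupp x hdx
  · intro h
    have := h (hsupp x₀ hx₀)
    simp only [fracSupport, mem_filter_univ, Pi.add_apply, Pi.smul_apply, smul_eq_mul] at this
    rcases add_boundaryTime_mul_eq_zero_or_one (μ x₀) hx₀ with h' | h'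
    exacts [this.1 h', this.2 h']

lemma exists_fracSupport_card_le [Fintype κ] (hμ : IsBalancing v S c μ) :
    ∃ μ', IsBalancing v S c μ' ∧ #(fracSupport μ') ≤ Fintype.card κ + 1 := by
  induction h : #(fracSupport μ) using Nat.strong_induction_on generalizing μ with
  | _ n ih =>
    by_cases hn : n ≤ Fintype.card κ + 1
    · exact ⟨μ, hμ, h ▸ hn⟩
    · obtain ⟨μ', hμ', hlt⟩ := hμ.exists_fracSupport_card_lt (by omega)
      exact ih _ (h ▸ hlt) hμ' rfl

lemma smul (hμ : IsBalancing v S c μ) {r : 𝕜} (hr : r ∈ Set.Icc (0 : 𝕜) 1) :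
    IsBalancing v S (r * c) (r • μ) where
  mem_Icc x :=
    ⟨mul_nonneg hr.1 (hμ.mem_Icc x).1, mul_le_one₀ hr.2 (hμ.mem_Icc x).1 (hμ.mem_Icc x).2⟩
  eq_zero_of_notMem x hx := by simp [hμ.eq_zero_of_notMem x hx]
  sum_eq := by simp [← mul_sum, hμ.sum_eq]
  sum_smul_eq_zero := by simp [mul_smul, ← smul_sum, hμ.sum_smul_eq_zero]

lemma exists_mem_eq_zero [Fintype κ] (hμ : IsBalancing v S (#S - (Fintype.card κ + 1)) μ)
    (hF : #(fracSupport μ) ≤ Fintype.card κ + 1) : ∃ x ∈ S, μ x = 0 := by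
  by_contra! h
  have hFS : fracSupport μ ⊆ S := fun x hx ↦ by_contra fun hxS ↦ by
    simp [fracSupport, hμ.eq_zero_of_notMem x hxS] at hx
  have hdeficit : ∑ x ∈ fracSupport μ, (1 - μ x) = Fintype.card κ + 1 := by
    rw [sum_subset hFS fun x hxS hx ↦ ?_, sum_sub_distrib, hμ.sum_eq']
    · simp
    · simp only [fracSupport, mem_filter_univ, h x hxS, ne_eq, not_false_eq_true, true_and,
        not_not] at hx
      rw [hx, sub_self]
  rcases (fracSupport μ).eq_empty_or_nonempty with hempty | hne
  · simp only [hempty, sum_empty] at hdeficit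
    linarith
  · have : ∑ x ∈ fracSupport μ, (1 - μ x) < #(fracSupport μ) := by
      simpa using sum_lt_sum_of_nonempty hne fun x hx ↦ sub_lt_self 1
        (lt_of_le_of_ne (hμ.mem_Icc x).1 (mem_filter_univ x |>.mp hx).1.symm)
    have : (#(fracSupport μ) : 𝕜) ≤ Fintype.card κ + 1 := by exact_mod_cast hF
    linarith

end IsBalancing

variable [Fintype κ]

def IsBalanced (v : ι → κ → 𝕜) (S : Finset ι) : Prop :=
  ∃ μ, IsBalancing v S (#S - Fintype.card κ) μ

variable {v : ι → κ → 𝕜} {S : Finset ι}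

lemma IsBalanced.exists_erase [DecidableEq ι] (hS : IsBalanced v S) (hcard : Fintype.card κ < #S) :
    ∃ x ∈ S, IsBalanced v (S.erase x) := by
  obtain ⟨μ, hμ⟩ := hS
  have hpos : (0 : 𝕜) < #S - Fintype.card κ := sub_pos.mpr (by exact_mod_cast hcard)
  have hr : (#S - (Fintype.card κ + 1) : 𝕜) / (#S - Fintype.card κ) ∈ Set.Icc (0 : 𝕜) 1 := by
    have : (Fintype.card κ + 1 : 𝕜) ≤ #S := by exact_mod_cast hcard
    exact ⟨div_nonneg (by linarith) hpos.le, (div_le_one hpos).mpr (by linarith)⟩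
  have hμr := hμ.smul hr
  rw [div_mul_cancel₀ _ hpos.ne'] at hμr
  obtain ⟨μ', hμ', hF⟩ := hμr.exists_fracSupport_card_le
  obtain ⟨x, hx, hμx⟩ := hμ'.exists_mem_eq_zero hF
  refine ⟨x, hx, μ', hμ'.mem_Icc, fun y hy ↦ ?_, ?_, hμ'.sum_smul_eq_zero⟩
  · by_cases hyx : y = x
    · rw [hyx, hμx]
    · exact hμ'.eq_zero_of_notMem y fun hyS ↦ hy (mem_erase.mpr ⟨hyx, hyS⟩)
  · rw [hμ'.sum_eq, card_erase_of_mem hx, Nat.cast_pred (card_pos.mpr ⟨x, hx⟩)]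
    ring

lemma IsBalanced.abs_sum_apply_le {Δ : 𝕜} (hv : ∀ x j, |v x j| ≤ Δ) (hS : IsBalanced v S)
    (j : κ) : |∑ x ∈ S, v x j| ≤ Fintype.card κ * Δ := by
  obtain ⟨μ, hμ⟩ := hS
  have hμv : ∑ x ∈ S, μ x * v x j = 0 := by
    simpa using congrFun hμ.sum_smul_eq_zero' j
  calc |∑ x ∈ S, v x j| = |∑ x ∈ S, (1 - μ x) * v x j| := by
        simp [sub_mul, sum_sub_distrib, hμv]
    _ ≤ ∑ x ∈ S, (1 - μ x) * Δ := by
        refine (abs_sum_le_sum_abs _ _).trans (sum_le_sum fun x _ ↦ ?_)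
        rw [abs_mul, abs_of_nonneg (sub_nonneg.mpr (hμ.mem_Icc x).2)]
        exact mul_le_mul_of_nonneg_left (hv x j) (sub_nonneg.mpr (hμ.mem_Icc x).2)
    _ = Fintype.card κ * Δ := by
        rw [← sum_mul, sum_sub_distrib, hμ.sum_eq']
        simp

lemma isBalanced_univ (hv₀ : ∑ x, v x = 0) (hcard : Fintype.card κ < Fintype.card ι) :
    IsBalanced v univ := by
  have hpos : (0 : 𝕜) < Fintype.card ι := by exact_mod_cast (by omega : 0 < Fintype.card ι)
  refine ⟨fun _ ↦ (Fintype.card ι - Fintype.card κ : 𝕜) / Fintype.card ι,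
    ⟨fun _ ↦ ?_, fun x hx ↦ absurd (mem_univ x) hx, ?_, by simp [← smul_sum, hv₀]⟩⟩
  · have : (Fintype.card κ : 𝕜) ≤ Fintype.card ι := by exact_mod_cast hcard.le
    exact ⟨div_nonneg (by linarith) hpos.le, (div_le_one hpos).mpr (by linarith)⟩
  · rw [sum_const, card_univ, nsmul_eq_mul, mul_div_cancel₀ _ hpos.ne']

theorem exists_monotone_chain_abs_sum_apply_le [DecidableEq ι] {Δ : 𝕜} (hΔ : 0 ≤ Δ)
    (hv : ∀ x j, |v x j| ≤ Δ) (hv₀ : ∑ x, v x = 0) :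
    ∃ C : ℕ → Finset ι, Monotone C ∧ (∀ k ≤ Fintype.card ι, #(C k) = k) ∧
      ∀ k j, |∑ x ∈ C k, v x j| ≤ Fintype.card κ * Δ := by
  set P : Finset ι → Prop := fun S ↦ #S ≤ Fintype.card κ ∨ IsBalanced v S
  have hP : ∀ S, P S → S.Nonempty → ∃ x ∈ S, P (S.erase x) := by
    rintro S (hS | hS) ⟨x, hx⟩
    · exact ⟨x, hx, .inl ((card_erase_le).trans hS)⟩
    by_cases hcard : #S ≤ Fintype.card κ
    · exact ⟨x, hx, .inl ((card_erase_le).trans hcard)⟩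
    · obtain ⟨y, hy, hSy⟩ := hS.exists_erase (not_le.mp hcard)
      exact ⟨y, hy, .inr hSy⟩
  have huniv : P univ := by
    by_cases hcard : #(univ : Finset ι) ≤ Fintype.card κ
    exacts [.inl hcard, .inr (isBalanced_univ hv₀ (by simpa using hcard))]
  obtain ⟨C, hmono, hC, hcard⟩ := exists_monotone_chain P hP huniv
  refine ⟨C, hmono, by simpa using hcard, fun k j ↦ ?_⟩
  rcases (hC k).2 with hsmall | hbal
  · calc |∑ x ∈ C k, v x j| ≤ ∑ x ∈ C k, |v x j| := abs_sum_le_sum_abs _ _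
      _ ≤ #(C k) * Δ := by simpa using sum_le_sum fun x (_ : x ∈ C k) ↦ hv x j
      _ ≤ Fintype.card κ * Δ := by gcongr
  · exact hbal.abs_sum_apply_le hv j

end Steinitz

lemma exists_lt_eq_of_abs_le {κ : Type*} [Fintype κ] {p : ℕ → κ → ℤ} {M t : ℕ}
    (hp : ∀ k j, |p k j| ≤ M) (ht : (2 * M + 1) ^ Fintype.card κ < t) :
    ∃ a b, 1 ≤ a ∧ a < b ∧ b ≤ t ∧ p a = p b := by
  classical
  have hbox : #(Icc (-M : κ → ℤ) M) < #(Icc 1 t) := by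
    simp only [Pi.card_Icc, Pi.neg_apply, Pi.natCast_apply, Int.card_Icc, prod_const, card_univ,
      Nat.card_Icc]
    convert ht using 2 <;> omega
  obtain ⟨a, ha, b, hb, hab, heq⟩ := exists_ne_map_eq_of_card_lt_of_maps_to hbox
    fun k _ ↦ mem_Icc.mpr ⟨fun j ↦ neg_le_of_abs_le (hp k j), fun j ↦ le_of_abs_le (hp k j)⟩
  rw [mem_Icc] at ha hb
  rcases hab.lt_or_gt with hab | hab
  exacts [⟨a, b, ha.1, hab, hb.2, heq⟩, ⟨b, a, hb.1, hab, ha.2, heq.symm⟩]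

theorem exists_sum_eq_zero_of_card_lt {α κ : Type*} [Fintype α] [DecidableEq α] [Fintype κ]
    {w : α → κ → ℤ} {Δ : ℕ} (hw : ∀ x j, |w x j| ≤ Δ) (hw₀ : ∑ x, w x = 0)
    (hcard : (2 * Fintype.card κ * Δ + 1) ^ Fintype.card κ < Fintype.card α) :
    ∃ T : Finset α, T.Nonempty ∧ Tᶜ.Nonempty ∧ ∑ x ∈ T, w x = 0 := by
  obtain ⟨C, hmono, hC, hbound⟩ := exists_monotone_chain_abs_sum_apply_le
    (v := fun x j ↦ (w x j : ℚ)) (Δ := Δ) (Nat.cast_nonneg Δ) (fun x j ↦ by exact_mod_cast hw x j)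
    (by ext j; simpa using congrArg (fun u : κ → ℤ ↦ (u j : ℚ)) hw₀)
  obtain ⟨a, b, ha, hab, hb, heq⟩ := exists_lt_eq_of_abs_le (p := fun k ↦ ∑ x ∈ C k, w x)
    (M := Fintype.card κ * Δ) (fun k j ↦ by rw [Finset.sum_apply]; exact_mod_cast hbound k j)
    (by rwa [← mul_assoc])
  have hCab : C a ⊆ C b := hmono hab.le
  refine ⟨C b \ C a, ?_, ?_, ?_⟩
  · rw [← card_pos, card_sdiff_of_subset hCab, hC a (by omega), hC b hb]
    omega
  · obtain ⟨x, hx⟩ := card_pos.mp ((hC a (by omega)).symm ▸ ha)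
    exact ⟨x, by simp [hx]⟩
  · rw [sum_sdiff_eq_sub hCab]
    exact sub_eq_zero.mpr heq.symm

section UnitSteps

variable {ι : Type*} (g : ι → ℤ)

/-- Indexes `g` as a sum of `|g i|` copies of `sign (g i) • eᵢ` for each `i`. -/
abbrev UnitStep : Type _ := (i : ι) × Fin (g i).natAbs

lemma card_unitStep [Fintype ι] : (Fintype.card (UnitStep g) : ℤ) = ∑ i, |g i| := by
  simp [Nat.cast_sum]

lemma UnitStep.apply_fst_ne_zero (x : UnitStep g) : g x.1 ≠ 0 := fun h ↦ by simpa [h] using x.2.pos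

variable [DecidableEq ι]

def unitStep (x : UnitStep g) : ι → ℤ := Pi.single x.1 (g x.1).sign

def stepSum (T : Finset (UnitStep g)) : ι → ℤ := ∑ x ∈ T, unitStep g x

lemma stepSum_apply (T : Finset (UnitStep g)) (j : ι) :
    stepSum g T j = #{x ∈ T | x.1 = j} * (g j).sign := by
  simp only [stepSum, unitStep, Finset.sum_apply, Pi.single_apply, eq_comm (a := j)]
  rw [← sum_filter, sum_congr rfl fun x hx ↦ by rw [(mem_filter.mp hx).2], sum_const, nsmul_eq_mul]

lemma stepSum_mul_stepSum_nonneg (T T' : Finset (UnitStep g)) (j : ι) :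
    0 ≤ stepSum g T j * stepSum g T' j := by
  rw [stepSum_apply, stepSum_apply, mul_mul_mul_comm]
  exact mul_nonneg (by positivity) (mul_self_nonneg _)

lemma stepSum_ne_zero {T : Finset (UnitStep g)} (hT : T.Nonempty) : stepSum g T ≠ 0 := by
  obtain ⟨x, hx⟩ := hT
  refine Function.ne_iff.mpr ⟨x.1, ?_⟩
  rw [stepSum_apply, Pi.zero_apply]
  have hcard : #{y ∈ T | y.1 = x.1} ≠ 0 := card_ne_zero_of_mem (mem_filter.mpr ⟨hx, rfl⟩)
  exact mul_ne_zero (by exact_mod_cast hcard)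
    (Int.sign_eq_zero_iff_zero.not.mpr (UnitStep.apply_fst_ne_zero g x))

variable [Fintype ι]

lemma stepSum_univ : stepSum g univ = g := by
  simp only [stepSum, unitStep, ← univ_sigma_univ, sum_sigma, sum_const, card_univ,
    Fintype.card_fin]
  conv_rhs => rw [← univ_sum_single g]
  refine sum_congr rfl fun i _ ↦ ?_
  rw [← Pi.single_smul, nsmul_eq_mul, mul_comm, Int.sign_mul_natAbs]

lemma stepSum_add_stepSum_compl (T : Finset (UnitStep g)) : stepSum g T + stepSum g Tᶜ = g := by
  rw [stepSum, stepSum, sum_add_sum_compl, ← stepSum, stepSum_univ]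

variable {ρ : Type*} {A : Matrix ρ ι ℤ}

lemma mulVec_stepSum (T : Finset (UnitStep g)) : A *ᵥ stepSum g T = ∑ x ∈ T, A *ᵥ unitStep g x :=
  Matrix.mulVec_sum A T _

lemma abs_mulVec_unitStep_le {Δ : ℤ} (hA : ∀ r i, |A r i| ≤ Δ) (x : UnitStep g) (r : ρ) :
    |(A *ᵥ unitStep g x) r| ≤ Δ := by
  simpa [unitStep, abs_mul, Int.abs_sign_of_ne_zero (UnitStep.apply_fst_ne_zero g x)] using hA r x.1

variable {g} in
lemma IsGraver.mulVec_stepSum_ne_zero [Fintype ρ] (hg : IsGraver A g) {T : Finset (UnitStep g)}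
    (hT : T.Nonempty) (hTc : Tᶜ.Nonempty) : A *ᵥ stepSum g T ≠ 0 := fun hAT ↦
  hg.2.2 ⟨stepSum g T, stepSum g Tᶜ, stepSum_ne_zero g hT, stepSum_ne_zero g hTc, hAT,
    by rw [← add_sub_cancel_left (stepSum g T) (stepSum g Tᶜ), stepSum_add_stepSum_compl,
      Matrix.mulVec_sub, hg.2.1, hAT, sub_zero],
    (stepSum_add_stepSum_compl g T).symm, stepSum_mul_stepSum_nonneg g T Tᶜ⟩

end UnitSteps

/-- Eisenbrand, Hunkenschröder, Klein: every Graver element `g`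
of a matrix `A ∈ ℤ^{m×n}` with entries bounded by `Δ` in absolute value
satisfies `‖g‖₁ ≤ (2mΔ+1)^m`. -/
theorem graver_norm_bound (m n Δ : ℕ) (A : Matrix (Fin m) (Fin n) ℤ)
    (hA : ∀ i j, |A i j| ≤ (Δ : ℤ)) (g : Fin n → ℤ) (hg : IsGraver A g) :
    ∑ i, |g i| ≤ (((2 * m * Δ + 1) ^ m : ℕ) : ℤ) := by
  by_contra! hlt
  obtain ⟨T, hT, hTc, hsum⟩ := exists_sum_eq_zero_of_card_lt (Δ := Δ)
    (abs_mulVec_unitStep_le g hA) (by rw [← mulVec_stepSum, stepSum_univ, hg.2.1])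
    (by rw [Fintype.card_fin]; rw [← card_unitStep] at hlt; exact_mod_cast hlt)
  exact hg.mulVec_stepSum_ne_zero hT hTc (by rw [mulVec_stepSum, hsum])
end

section
/- Let d ≥ 1, Δ ≥ 1, and let B^(1), B^(2) ⊂ ℤ_{≥0}^d be finite sets of vectors with ‖x‖_∞ ≤ Δ for every x ∈ B^(1) ∪ B^(2). Then there exists a finite set B̂ ⊂ ℤ_{≥0}^d with ‖b‖_∞ ≤ Δ·(2dΔ + 1)^d for every b ∈ B̂ such that int.cone(B̂) = int.cone(B^(1)) ∩ int.cone(B^(2)); in particular, the intersection of two integer cones is again an integer cone, generated by its indecomposable elements, all of which have ∞-norm at most Δ·(2dΔ + 1)^d. -/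
/-- The integer cone generated by a finite set `B ⊂ ℤ^d`. -/
def intCone {d : ℕ} (B : Finset (Fin d → ℤ)) : Set (Fin d → ℤ) :=
  {x | ∃ lam : (Fin d → ℤ) → ℕ, x = ∑ v ∈ B, (lam v : ℤ) • v}

/-- An element of an (additively closed) set `C ⊆ ℤ^d` is indecomposable in `C`
if it is a nonzero element of `C` that is not the sum of two nonzero elements
of `C`. -/
def Indecomp {d : ℕ} (C : Set (Fin d → ℤ)) (x : Fin d → ℤ) : Prop :=
  x ∈ C ∧ x ≠ 0 ∧ ∀ y z : Fin d → ℤ, y ∈ C → z ∈ C → y ≠ 0 → z ≠ 0 → x ≠ y + z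


lemma intCone_zero {d : ℕ} (B : Finset (Fin d → ℤ)) : (0 : Fin d → ℤ) ∈ intCone B := by
  exact ⟨fun _ => 0, by simp⟩

lemma intCone_gen {d : ℕ} {B : Finset (Fin d → ℤ)} {b : Fin d → ℤ} (hb : b ∈ B) :
    b ∈ intCone B := by
  refine ⟨fun v => if v = b then 1 else 0, Eq.symm ?_⟩
  have : ∀ v ∈ B, (((fun v => if v = b then (1:ℕ) else 0) v : ℕ) : ℤ) • v = if v = b then b else 0 := by
    intro v hv
    by_cases h : v = b <;> simp [h]
  calc ∑ v ∈ B, (((fun v => if v = b then (1:ℕ) else 0) v : ℕ) : ℤ) • v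
      = ∑ v ∈ B, (if v = b then b else 0) := Finset.sum_congr rfl this
    _ = b := by rw [Finset.sum_ite_eq' B b (fun _ => b)]; simp [hb]

lemma intCone_add {d : ℕ} {B : Finset (Fin d → ℤ)} {x y : Fin d → ℤ}
    (hx : x ∈ intCone B) (hy : y ∈ intCone B) : x + y ∈ intCone B := by
  obtain ⟨l1, h1⟩ := hx
  obtain ⟨l2, h2⟩ := hy
  refine ⟨l1 + l2, ?_⟩
  rw [h1, h2, ← Finset.sum_add_distrib]
  apply Finset.sum_congr rfl
  intro v _
  simp only [Pi.add_apply]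
  push_cast
  rw [add_smul]

/-- Membership via an indexed family. -/
lemma intCone_iff_fam {d : ℕ} (B : Finset (Fin d → ℤ)) (x : Fin d → ℤ) :
    x ∈ intCone B ↔ ∃ (n : ℕ) (f : Fin n → (Fin d → ℤ)),
      (∀ i, f i ∈ B) ∧ x = ∑ i, f i := by
  classical
  constructor
  · rintro ⟨lam, rfl⟩
    set σ := Σ v : {v // v ∈ B}, Fin (lam v.1) with hσ
    have e : σ ≃ Fin (Fintype.card σ) := Fintype.equivFin σ
    refine ⟨Fintype.card σ, fun i => (e.symm i).1.1, fun i => (e.symm i).1.2, ?_⟩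
    calc ∑ v ∈ B, (lam v : ℤ) • v
        = ∑ v ∈ B.attach, (lam v.1 : ℤ) • v.1 := (Finset.sum_attach B _).symm
      _ = ∑ s : σ, (s.1.1 : Fin d → ℤ) := by
          rw [← Finset.univ_sigma_univ, Finset.sum_sigma]
          apply Finset.sum_congr rfl
          intro v _
          simp
      _ = ∑ i, (e.symm i).1.1 := (Equiv.sum_comp e.symm _).symm
  · rintro ⟨n, f, hf, rfl⟩
    refine ⟨fun v => (Finset.univ.filter (fun i => f i = v)).card, ?_⟩
    rw [← Finset.sum_fiberwise_of_maps_to (g := fun i => (f i : Fin d → ℤ)) (fun i _ => hf i)]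
    apply Finset.sum_congr rfl
    intro v _
    rw [Finset.sum_congr rfl (fun i hi => (Finset.mem_filter.mp hi).2), Finset.sum_const]
    simp

section Steinitz

variable {ι : Type*} [Fintype ι] [DecidableEq ι] {d : ℕ}

lemma steinitz_step
    (v : ι → (Fin d → ℚ)) (A : Finset ι) (c : Fin d → ℚ) (s : ℚ)
    (hs : s + (d + 1) ≤ (A.card : ℚ))
    (lam : ι → ℚ)
    (h01 : ∀ i ∈ A, 0 ≤ lam i ∧ lam i ≤ 1)
    (hv : ∑ i ∈ A, lam i • v i = c)
    (hsum : ∑ i ∈ A, lam i = s)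
    (hnz : ∀ i ∈ A, lam i ≠ 0) :
    d + 2 ≤ (A.filter (fun i => lam i ≠ 0 ∧ lam i ≠ 1)).card ∧
    ∃ lam' : ι → ℚ, (∀ i ∈ A, 0 ≤ lam' i ∧ lam' i ≤ 1) ∧
      (∑ i ∈ A, lam' i • v i = c) ∧ (∑ i ∈ A, lam' i = s) ∧
      (A.filter (fun i => lam' i ≠ 0 ∧ lam' i ≠ 1)).card + 1 ≤
        (A.filter (fun i => lam i ≠ 0 ∧ lam i ≠ 1)).card := by
  classical
  set F := A.filter (fun i => lam i ≠ 1) with hF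
  have hFsub : F ⊆ A := Finset.filter_subset _ _
  have hfrac_eq : A.filter (fun i => lam i ≠ 0 ∧ lam i ≠ 1) = F := by
    apply Finset.filter_congr
    intro i hi
    simp only [ne_eq, and_iff_right_iff_imp]
    intro _
    exact hnz i hi
  have hmemF : ∀ i ∈ F, 0 < lam i ∧ lam i < 1 := by
    intro i hi
    have hiA : i ∈ A := hFsub hi
    have h1 : lam i ≠ 1 := (Finset.mem_filter.mp hi).2
    have := h01 i hiA
    constructor
    · exact lt_of_le_of_ne this.1 (Ne.symm (hnz i hiA))
    · exact lt_of_le_of_ne this.2 h1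
  -- the sum of (1 - lam i) over F is at least d+1
  have hsumA : ∑ i ∈ F, (1 - lam i) = (A.card : ℚ) - s := by
    rw [Finset.sum_subset hFsub]
    · rw [Finset.sum_sub_distrib, hsum, Finset.sum_const, nsmul_eq_mul, mul_one]
    · intro i hiA hiF
      have : lam i = 1 := by
        by_contra h
        exact hiF (Finset.mem_filter.mpr ⟨hiA, h⟩)
      simp [this]
  have hkey : (d + 1 : ℚ) ≤ ∑ i ∈ F, (1 - lam i) := by
    rw [hsumA]; linarith
  have hFne : F.Nonempty := by
    rcases Finset.eq_empty_or_nonempty F with h | h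
    · exfalso
      rw [h, Finset.sum_empty] at hkey
      have : (0:ℚ) < d + 1 := by positivity
      linarith
    · exact h
  have hFcard : d + 2 ≤ F.card := by
    have hlt : ∑ i ∈ F, (1 - lam i) < ∑ i ∈ F, (1:ℚ) := by
      apply Finset.sum_lt_sum_of_nonempty hFne
      intro i hi
      have := (hmemF i hi).1
      linarith
    rw [Finset.sum_const, nsmul_eq_mul, mul_one] at hlt
    have : (d + 1 : ℚ) < F.card := lt_of_le_of_lt hkey hlt
    have hdlt : (d + 1 : ℕ) < F.card := by exact_mod_cast this
    omega
  -- a nontrivial kernel element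
  have hcardF : Fintype.card ↥F = F.card := Fintype.card_coe F
  let Φ : (↥F → ℚ) →ₗ[ℚ] (Fin d → ℚ) × ℚ :=
    { toFun := fun μ => (∑ i, μ i • v i.1, ∑ i, μ i)
      map_add' := by
        intro a b
        refine Prod.ext ?_ ?_ <;> simp [add_smul, Finset.sum_add_distrib]
      map_smul' := by
        intro t a
        refine Prod.ext ?_ ?_ <;>
          simp [Finset.smul_sum, smul_smul, Finset.mul_sum] }
  have hni : ¬ Function.Injective Φ := by
    intro hinj
    have h1 := LinearMap.finrank_le_finrank_of_injective hinj
    rw [Module.finrank_prod] at h1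
    simp only [Module.finrank_fintype_fun_eq_card, Module.finrank_self, hcardF,
      Fintype.card_fin] at h1
    omega
  rw [Function.not_injective_iff] at hni
  obtain ⟨a, b, hab, hne⟩ := hni
  set μ : ↥F → ℚ := a - b with hμdef
  have hμ0 : Φ μ = 0 := by rw [map_sub, hab, sub_self]
  have hμne : μ ≠ 0 := sub_ne_zero.mpr hne
  have hμv : ∑ i : ↥F, μ i • v i.1 = 0 := congrArg Prod.fst hμ0
  have hμs : ∑ i : ↥F, μ i = 0 := congrArg Prod.snd hμ0
  -- the step size
  set T : Finset ↥F := Finset.univ.filter (fun i => μ i ≠ 0) with hT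
  have hTne : T.Nonempty := by
    rw [Function.ne_iff] at hμne
    obtain ⟨i, hi⟩ := hμne
    exact ⟨i, Finset.mem_filter.mpr ⟨Finset.mem_univ _, hi⟩⟩
  set r : ↥F → ℚ := fun i => if 0 < μ i then (1 - lam i.1) / μ i else lam i.1 / (-μ i) with hr
  have hrpos : ∀ i ∈ T, 0 < r i := by
    intro i hi
    have hiμ : μ i ≠ 0 := (Finset.mem_filter.mp hi).2
    have h1 := hmemF i.1 i.2
    by_cases h : 0 < μ i
    · simp only [hr, if_pos h]
      apply div_pos (by linarith [h1.2]) h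
    · simp only [hr, if_neg h]
      have : μ i < 0 := lt_of_le_of_ne (not_lt.mp h) hiμ
      apply div_pos (h1.1) (by linarith)
  set R := T.image r with hR
  have hRne : R.Nonempty := hTne.image r
  set t : ℚ := R.min' hRne with ht
  obtain ⟨i₀, hi₀T, hi₀r⟩ := Finset.mem_image.mp (R.min'_mem hRne)
  have htpos : 0 < t := by rw [ht, ← hi₀r]; exact hrpos i₀ hi₀T
  have hmin : ∀ i ∈ T, t ≤ r i := by
    intro i hi
    exact R.min'_le _ (Finset.mem_image_of_mem r hi)
  have hμi₀ : μ i₀ ≠ 0 := (Finset.mem_filter.mp hi₀T).2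
  set lam' : ι → ℚ := fun j => if h : j ∈ F then lam j + t * μ ⟨j, h⟩ else lam j with hlam'
  -- bounds on lam' on all of F (and A)
  have hbd : ∀ i ∈ A, 0 ≤ lam' i ∧ lam' i ≤ 1 := by
    intro i hiA
    by_cases hiF : i ∈ F
    · simp only [hlam', dif_pos hiF]
      set m := μ ⟨i, hiF⟩ with hm
      have h1 := hmemF i hiF
      rcases lt_trichotomy m 0 with hneg | hzero | hpos
      · have hiT : (⟨i, hiF⟩ : ↥F) ∈ T :=
          Finset.mem_filter.mpr ⟨Finset.mem_univ _, by rw [← hm]; exact ne_of_lt hneg⟩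
        have hrle := hmin _ hiT
        have hrval : r ⟨i, hiF⟩ = lam i / (-m) := by
          simp only [hr]; rw [if_neg (by rw [← hm]; exact not_lt.mpr (le_of_lt hneg))]
        rw [hrval] at hrle
        constructor
        · have : t * (-m) ≤ (lam i / (-m)) * (-m) :=
            mul_le_mul_of_nonneg_right hrle (by linarith)
          rw [div_mul_cancel₀ _ (by linarith : (-m) ≠ 0)] at this
          linarith
        · nlinarith
      · rw [hzero, mul_zero, add_zero]; exact ⟨le_of_lt h1.1, le_of_lt h1.2⟩
      · have hiT : (⟨i, hiF⟩ : ↥F) ∈ T :=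
          Finset.mem_filter.mpr ⟨Finset.mem_univ _, by rw [← hm]; exact ne_of_gt hpos⟩
        have hrle := hmin _ hiT
        have hrval : r ⟨i, hiF⟩ = (1 - lam i) / m := by
          simp only [hr]; rw [if_pos (by rw [← hm]; exact hpos)]
        rw [hrval] at hrle
        constructor
        · nlinarith
        · have : t * m ≤ ((1 - lam i) / m) * m :=
            mul_le_mul_of_nonneg_right hrle (le_of_lt hpos)
          rw [div_mul_cancel₀ _ (ne_of_gt hpos)] at this
          linarith
    · simp only [hlam', dif_neg hiF]
      exact h01 i hiA
  refine ⟨by rw [hfrac_eq]; exact hFcard, lam', hbd, ?_, ?_, ?_⟩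
  · -- vector sum preserved
    have e0 : ∀ i ∈ A, lam' i • v i
        = lam i • v i + (if h : i ∈ F then (t * μ ⟨i, h⟩) • v i else 0) := by
      intro i _
      by_cases hiF : i ∈ F
      · simp only [hlam', dif_pos hiF, add_smul]
      · simp only [hlam', dif_neg hiF, add_zero]
    rw [Finset.sum_congr rfl e0, Finset.sum_add_distrib, hv]
    have e1 : ∑ i ∈ A, (if h : i ∈ F then (t * μ ⟨i, h⟩) • v i else 0)
        = ∑ i ∈ F, (if h : i ∈ F then (t * μ ⟨i, h⟩) • v i else 0) :=
      (Finset.sum_subset hFsub (fun i _ hiF => dif_neg hiF)).symm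
    have e2 : ∑ i ∈ F, (if h : i ∈ F then (t * μ ⟨i, h⟩) • v i else 0)
        = ∑ i ∈ F.attach, (t * μ i) • v i.1 := by
      rw [← Finset.sum_attach F (fun i => if h : i ∈ F then (t * μ ⟨i, h⟩) • v i else 0)]
      apply Finset.sum_congr rfl
      intro i _
      rw [dif_pos i.2]
    have e3 : ∑ i ∈ F.attach, (t * μ i) • v i.1 = 0 := by
      have : ∑ i ∈ F.attach, (t * μ i) • v i.1 = t • ∑ i ∈ F.attach, μ i • v i.1 := by
        rw [Finset.smul_sum]
        apply Finset.sum_congr rfl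
        intro i _
        rw [smul_smul]
      rw [this, ← Finset.univ_eq_attach, hμv, smul_zero]
    rw [e1, e2, e3, add_zero]
  · -- scalar sum preserved
    have e0 : ∀ i ∈ A, lam' i = lam i + (if h : i ∈ F then t * μ ⟨i, h⟩ else 0) := by
      intro i _
      by_cases hiF : i ∈ F
      · simp only [hlam', dif_pos hiF]
      · simp only [hlam', dif_neg hiF, add_zero]
    rw [Finset.sum_congr rfl e0, Finset.sum_add_distrib, hsum]
    have e1 : ∑ i ∈ A, (if h : i ∈ F then t * μ ⟨i, h⟩ else 0)
        = ∑ i ∈ F, (if h : i ∈ F then t * μ ⟨i, h⟩ else 0) :=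
      (Finset.sum_subset hFsub (fun i _ hiF => dif_neg hiF)).symm
    have e2 : ∑ i ∈ F, (if h : i ∈ F then t * μ ⟨i, h⟩ else 0)
        = ∑ i ∈ F.attach, t * μ i := by
      rw [← Finset.sum_attach F (fun i => if h : i ∈ F then t * μ ⟨i, h⟩ else 0)]
      apply Finset.sum_congr rfl
      intro i _
      rw [dif_pos i.2]
    have e3 : ∑ i ∈ F.attach, t * μ i = 0 := by
      rw [← Finset.mul_sum, ← Finset.univ_eq_attach, hμs, mul_zero]
    rw [e1, e2, e3, add_zero]
  · -- fractional count drops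
    have hval : lam' i₀.1 = 0 ∨ lam' i₀.1 = 1 := by
      have : lam' i₀.1 = lam i₀.1 + t * μ i₀ := by
        simp only [hlam', dif_pos i₀.2]
      rw [ht, ← hi₀r] at this
      by_cases h : 0 < μ i₀
      · right
        rw [this]
        simp only [hr]
        rw [if_pos h, div_mul_cancel₀ _ (ne_of_gt h)]
        ring
      · left
        rw [this]
        simp only [hr]
        rw [if_neg h]
        have hlt : μ i₀ < 0 := lt_of_le_of_ne (not_lt.mp h) hμi₀
        field_simp
        ring
    have hsub : A.filter (fun i => lam' i ≠ 0 ∧ lam' i ≠ 1) ⊆ F.erase i₀.1 := by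
      intro i hi
      have hmem := Finset.mem_filter.mp hi
      obtain ⟨hiA, h0, h1⟩ : i ∈ A ∧ lam' i ≠ 0 ∧ lam' i ≠ 1 := ⟨hmem.1, hmem.2.1, hmem.2.2⟩
      have hiF : i ∈ F := by
        by_contra hiF
        have : lam' i = lam i := by simp only [hlam', dif_neg hiF]
        have hl1 : lam i = 1 := by
          by_contra h
          exact hiF (Finset.mem_filter.mpr ⟨hiA, h⟩)
        rw [this, hl1] at h1
        exact h1 rfl
      apply Finset.mem_erase.mpr
      refine ⟨?_, hiF⟩
      intro heq
      rcases hval with h | h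
      · rw [heq] at h0; exact h0 h
      · rw [heq] at h1; exact h1 h
    have hc1 := Finset.card_le_card hsub
    rw [Finset.card_erase_of_mem i₀.2] at hc1
    rw [hfrac_eq]
    omega


lemma steinitz_zero
    (v : ι → (Fin d → ℚ)) (A : Finset ι) (c : Fin d → ℚ) (s : ℚ)
    (hs : s + (d + 1) ≤ (A.card : ℚ)) :
    ∀ N : ℕ, ∀ lam : ι → ℚ,
      (A.filter (fun i => lam i ≠ 0 ∧ lam i ≠ 1)).card ≤ N →
      (∀ i ∈ A, 0 ≤ lam i ∧ lam i ≤ 1) →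
      (∑ i ∈ A, lam i • v i = c) →
      (∑ i ∈ A, lam i = s) →
      ∃ lam' : ι → ℚ, (∀ i ∈ A, 0 ≤ lam' i ∧ lam' i ≤ 1) ∧
        (∑ i ∈ A, lam' i • v i = c) ∧ (∑ i ∈ A, lam' i = s) ∧ ∃ i ∈ A, lam' i = 0 := by
  classical
  intro N
  induction N with
  | zero =>
      intro lam hcard h01 hv hsum
      by_cases hz : ∃ i ∈ A, lam i = 0
      · exact ⟨lam, h01, hv, hsum, hz⟩
      · push_neg at hz
        have := (steinitz_step v A c s hs lam h01 hv hsum hz).1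
        omega
  | succ N ih =>
      intro lam hcard h01 hv hsum
      by_cases hz : ∃ i ∈ A, lam i = 0
      · exact ⟨lam, h01, hv, hsum, hz⟩
      · push_neg at hz
        obtain ⟨hge, lam2, h01', hv', hsum', hdrop⟩ :=
          steinitz_step v A c s hs lam h01 hv hsum hz
        exact ih lam2 (by omega) h01' hv' hsum'

lemma steinitz_down
    (v : ι → (Fin d → ℚ)) (A : Finset ι) (hA : d < A.card)
    (lam : ι → ℚ)
    (h01 : ∀ i ∈ A, 0 ≤ lam i ∧ lam i ≤ 1)
    (hv : ∑ i ∈ A, lam i • v i = 0)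
    (hsum : ∑ i ∈ A, lam i = (A.card : ℚ) - d) :
    ∃ i ∈ A, ∃ lam' : ι → ℚ, (∀ i' ∈ A.erase i, 0 ≤ lam' i' ∧ lam' i' ≤ 1) ∧
      (∑ i' ∈ A.erase i, lam' i' • v i' = 0) ∧
      (∑ i' ∈ A.erase i, lam' i' = ((A.erase i).card : ℚ) - d) := by
  classical
  have hcard : (d : ℚ) < (A.card : ℚ) := by exact_mod_cast hA
  have hcard1 : (d : ℚ) + 1 ≤ (A.card : ℚ) := by
    have : (d : ℕ) + 1 ≤ A.card := hA
    exact_mod_cast this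
  have hc0 : (0:ℚ) < (A.card:ℚ) - d := by linarith
  set f : ℚ := ((A.card:ℚ) - 1 - d)/((A.card:ℚ) - d) with hf
  have hf0 : 0 ≤ f := div_nonneg (by linarith) (le_of_lt hc0)
  have hf1 : f ≤ 1 := by rw [hf, div_le_one hc0]; linarith
  set κ : ι → ℚ := fun i => f * lam i with hκ
  have h01' : ∀ i ∈ A, 0 ≤ κ i ∧ κ i ≤ 1 := by
    intro i hi
    obtain ⟨h0, h1⟩ := h01 i hi
    constructor
    · exact mul_nonneg hf0 h0
    · calc f * lam i ≤ 1 * 1 := by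
            apply mul_le_mul hf1 h1 h0 (by norm_num)
        _ = 1 := by norm_num
  have hv' : ∑ i ∈ A, κ i • v i = 0 := by
    have : ∀ i ∈ A, κ i • v i = f • (lam i • v i) := by
      intro i _
      rw [hκ, mul_smul]
    rw [Finset.sum_congr rfl this, ← Finset.smul_sum, hv, smul_zero]
  have hsum' : ∑ i ∈ A, κ i = (A.card : ℚ) - 1 - d := by
    rw [hκ, ← Finset.mul_sum, hsum, hf, div_mul_cancel₀ _ (ne_of_gt hc0)]
  obtain ⟨lam', h01'', hv'', hsum'', i, hiA, hi0⟩ :=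
    steinitz_zero v A 0 ((A.card : ℚ) - 1 - d) (by linarith)
      ((A.filter (fun i => κ i ≠ 0 ∧ κ i ≠ 1)).card) κ le_rfl h01' hv' hsum'
  refine ⟨i, hiA, lam', ?_, ?_, ?_⟩
  · intro i' hi'
    exact h01'' i' (Finset.mem_of_mem_erase hi')
  · have h := Finset.sum_erase_add A (fun i' => lam' i' • v i') hiA
    simp only [hi0, zero_smul, add_zero] at h
    rw [h]; exact hv''
  · have h := Finset.sum_erase_add A (fun i' => lam' i') hiA
    simp only [hi0, add_zero] at h
    rw [h, hsum'', Finset.card_erase_of_mem hiA]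
    have h1 : 1 ≤ A.card := by omega
    push_cast [Nat.cast_sub h1]
    ring

lemma steinitz_chain_aux (Δ : ℕ) (u : ι → (Fin d → ℤ))
    (hbd : ∀ i j, |u i j| ≤ (Δ : ℤ)) :
    ∀ (m : ℕ) (A : Finset ι), A.card = m →
    (d < m → ∃ lam : ι → ℚ, (∀ i ∈ A, 0 ≤ lam i ∧ lam i ≤ 1) ∧
        (∑ i ∈ A, lam i • (fun j => (u i j : ℚ)) = 0) ∧
        (∑ i ∈ A, lam i = (m : ℚ) - d)) →
    ∃ g : ℕ → Finset ι, Monotone g ∧ (∀ k ≤ m, (g k).card = k) ∧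
      (∀ k, m ≤ k → g k = A) ∧ (∀ k, g k ⊆ A) ∧
      (∀ k j, |∑ i ∈ g k, u i j| ≤ (d : ℤ) * Δ) := by
  classical
  intro m
  induction m with
  | zero =>
      intro A hcard _
      have hA : A = ∅ := Finset.card_eq_zero.mp hcard
      refine ⟨fun _ => ∅, monotone_const, ?_, ?_, ?_, ?_⟩
      · intro k hk
        interval_cases k
        simp
      · intro k _; rw [hA]
      · intro k; simp
      · intro k j
        simp only [Finset.sum_empty, Pi.zero_apply, abs_zero]
        positivity
  | succ m ih =>
      intro A hcard hgood
      -- bound for the full set A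
      have hAbound : ∀ j, |∑ i ∈ A, u i j| ≤ (d : ℤ) * Δ := by
        intro j
        by_cases hdm : d < m + 1
        · -- use the fractional witness
          obtain ⟨lam, h01, hv, hsum⟩ := hgood hdm
          have hvj : ∑ i ∈ A, lam i * (u i j : ℚ) = 0 := by
            have := congrFun hv j
            simpa using this
          have key : ((∑ i ∈ A, u i j : ℤ) : ℚ) = ∑ i ∈ A, (1 - lam i) * (u i j : ℚ) := by
            push_cast
            rw [Finset.sum_congr rfl (fun i _ => by ring :
              ∀ i ∈ A, (1 - lam i) * (u i j : ℚ) = (u i j : ℚ) - lam i * (u i j : ℚ))]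
            rw [Finset.sum_sub_distrib, hvj, sub_zero]
          have habs : |((∑ i ∈ A, u i j : ℤ) : ℚ)| ≤ (d : ℚ) * Δ := by
            rw [key]
            calc |∑ i ∈ A, (1 - lam i) * (u i j : ℚ)|
                ≤ ∑ i ∈ A, |(1 - lam i) * (u i j : ℚ)| := Finset.abs_sum_le_sum_abs _ _
              _ ≤ ∑ i ∈ A, (1 - lam i) * Δ := by
                  apply Finset.sum_le_sum
                  intro i hi
                  rw [abs_mul]
                  have h1 : |1 - lam i| = 1 - lam i := abs_of_nonneg (by linarith [(h01 i hi).2])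
                  rw [h1]
                  apply mul_le_mul_of_nonneg_left _ (by linarith [(h01 i hi).2])
                  exact_mod_cast hbd i j
              _ = (∑ i ∈ A, (1 - lam i)) * Δ := by rw [Finset.sum_mul]
              _ = ((A.card : ℚ) - ∑ i ∈ A, lam i) * Δ := by
                  rw [Finset.sum_sub_distrib, Finset.sum_const, nsmul_eq_mul, mul_one]
              _ = (d : ℚ) * Δ := by rw [hsum, hcard]; push_cast; ring
          exact_mod_cast habs
        · -- small set: crude bound
          push_neg at hdm
          calc |∑ i ∈ A, u i j| ≤ ∑ i ∈ A, |u i j| := Finset.abs_sum_le_sum_abs _ _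
            _ ≤ ∑ _i ∈ A, (Δ : ℤ) := Finset.sum_le_sum (fun i _ => hbd i j)
            _ = (A.card : ℤ) * Δ := by rw [Finset.sum_const, nsmul_eq_mul]
            _ ≤ (d : ℤ) * Δ := by
                apply mul_le_mul_of_nonneg_right _ (by positivity)
                rw [hcard]
                exact_mod_cast hdm
      -- find the element to remove and the goodness witness for the smaller set
      have hstep : ∃ i ∈ A, (d < m → ∃ lam : ι → ℚ,
          (∀ i' ∈ A.erase i, 0 ≤ lam i' ∧ lam i' ≤ 1) ∧
          (∑ i' ∈ A.erase i, lam i' • (fun j => (u i' j : ℚ)) = 0) ∧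
          (∑ i' ∈ A.erase i, lam i' = (m : ℚ) - d)) := by
        by_cases hdm : d < m + 1
        · obtain ⟨lam, h01, hv, hsum⟩ := hgood hdm
          obtain ⟨i, hiA, lam', h01', hv', hsum'⟩ :=
            steinitz_down (fun i => (fun j => (u i j : ℚ))) A (by omega : d < A.card)
              lam h01 hv (by rw [hsum, hcard]; try (push_cast; ring))
          refine ⟨i, hiA, fun _ => ⟨lam', h01', hv', by
            rw [hsum', Finset.card_erase_of_mem hiA, hcard]
            try norm_num⟩⟩
        · have : A.Nonempty := by
            rw [← Finset.card_pos, hcard]; omega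
          obtain ⟨i, hiA⟩ := this
          exact ⟨i, hiA, fun h => absurd h (by omega)⟩
      obtain ⟨i, hiA, hgood'⟩ := hstep
      obtain ⟨g', hmono, hcards, htop, hsub, hbnd⟩ :=
        ih (A.erase i) (by rw [Finset.card_erase_of_mem hiA, hcard]; omega) hgood'
      refine ⟨fun k => if m + 1 ≤ k then A else g' k, ?_, ?_, ?_, ?_, ?_⟩
      · intro k l hkl
        by_cases hk : m + 1 ≤ k
        · simp only [if_pos hk, if_pos (le_trans hk hkl)]
          exact subset_rfl
        · simp only [if_neg hk]
          by_cases hl : m + 1 ≤ l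
          · simp only [if_pos hl]
            exact le_trans (hsub k) (Finset.erase_subset i A)
          · simp only [if_neg hl]
            exact hmono hkl
      · intro k hk
        by_cases h : m + 1 ≤ k
        · simp only [if_pos h]
          have : k = m + 1 := le_antisymm hk h
          rw [this, hcard]
        · simp only [if_neg h]
          exact hcards k (by omega)
      · intro k hk
        simp only [if_pos hk]
      · intro k
        by_cases h : m + 1 ≤ k
        · simp only [if_pos h]
          exact subset_rfl
        · simp only [if_neg h]
          exact le_trans (hsub k) (Finset.erase_subset i A)
      · intro k j
        by_cases h : m + 1 ≤ k
        · simp only [if_pos h]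
          exact hAbound j
        · simp only [if_neg h]
          exact hbnd k j

end Steinitz

section Chain

variable {ι : Type*} [Fintype ι] [DecidableEq ι] {d : ℕ}

lemma steinitz_chain (Δ : ℕ) (u : ι → (Fin d → ℤ))
    (hbd : ∀ i j, |u i j| ≤ (Δ : ℤ)) (hzero : ∑ i, u i = 0) :
    ∃ g : ℕ → Finset ι, Monotone g ∧ (∀ k ≤ Fintype.card ι, (g k).card = k) ∧
      (∀ k j, |∑ i ∈ g k, u i j| ≤ (d : ℤ) * Δ) := by
  classical
  have huq : ∑ i ∈ Finset.univ, (fun j => (u i j : ℚ)) = (0 : Fin d → ℚ) := by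
    funext j
    rw [Finset.sum_apply]
    have : ∑ i, (u i j : ℚ) = ((∑ i, u i j : ℤ) : ℚ) := by push_cast; rfl
    rw [this]
    have : ∑ i, u i j = (∑ i, u i) j := (Finset.sum_apply j Finset.univ u).symm
    rw [this, hzero]
    simp
  obtain ⟨g, h1, h2, _, _, h5⟩ :=
    steinitz_chain_aux Δ u hbd (Fintype.card ι) Finset.univ (by simp) (by
      intro hdm
      set n := Fintype.card ι
      have hn0 : (0:ℚ) < (n:ℚ) := by
        have : 0 < n := by omega
        exact_mod_cast this
      have hdn : (d:ℚ) < (n:ℚ) := by exact_mod_cast hdm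
      refine ⟨fun _ => ((n:ℚ) - d)/n, ?_, ?_, ?_⟩
      · intro i _
        constructor
        · apply div_nonneg (by linarith) (le_of_lt hn0)
        · rw [div_le_one hn0]; linarith
      · rw [← Finset.smul_sum, huq, smul_zero]
      · rw [Finset.sum_const, Finset.card_univ, nsmul_eq_mul]
        field_simp
        rfl)
  exact ⟨g, h1, h2, h5⟩

end Chain

lemma intCone_sum_mem {d : ℕ} {B : Finset (Fin d → ℤ)} {ι : Type*} (S : Finset ι)
    (F : ι → (Fin d → ℤ)) (h : ∀ i ∈ S, F i ∈ B) : (∑ i ∈ S, F i) ∈ intCone B :=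
  Finset.sum_induction F (· ∈ intCone B) (fun _ _ ha hb => intCone_add ha hb)
    (intCone_zero B) (fun i hi => intCone_gen (h i hi))

lemma total_pos {d : ℕ} {w : Fin d → ℤ} (hnn : ∀ j, 0 ≤ w j) (hW : w ≠ 0) :
    0 < ∑ j, w j := by
  obtain ⟨j, hj⟩ := Function.ne_iff.mp hW
  apply Finset.sum_pos'
  · intro j _; exact hnn j
  · exact ⟨j, Finset.mem_univ j, lt_of_le_of_ne (hnn j) (Ne.symm hj)⟩

lemma sum_ne_zero_vec {d : ℕ} {ι : Type*} (S : Finset ι) (hS : S.Nonempty)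
    (F : ι → (Fin d → ℤ)) (h0 : ∀ i ∈ S, F i ≠ 0) (hnn : ∀ i ∈ S, ∀ j, 0 ≤ F i j) :
    (∑ i ∈ S, F i) ≠ 0 := by
  intro hcontra
  have htot : ∑ j, (∑ i ∈ S, F i) j = 0 := by rw [hcontra]; simp
  have : ∑ j, (∑ i ∈ S, F i) j = ∑ i ∈ S, ∑ j, F i j := by
    rw [Finset.sum_comm]
    apply Finset.sum_congr rfl
    intro j _
    exact Finset.sum_apply j S F
  rw [this] at htot
  have hpos : 0 < ∑ i ∈ S, ∑ j, F i j :=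
    Finset.sum_pos (fun i hi => total_pos (hnn i hi) (h0 i hi)) hS
  omega

theorem decompose_of_large {d Δ : ℕ} (hΔ : 1 ≤ Δ)
    (B₁ B₂ : Finset (Fin d → ℤ))
    (hnn : ∀ x ∈ B₁ ∪ B₂, ∀ j, 0 ≤ x j)
    (hbd : ∀ x ∈ B₁ ∪ B₂, ∀ j, |x j| ≤ (Δ : ℤ))
    (x : Fin d → ℤ) (hx1 : x ∈ intCone B₁) (hx2 : x ∈ intCone B₂)
    (j₀ : Fin d) (hbig : (Δ : ℤ) * (((2 * d * Δ + 1) ^ d : ℕ) : ℤ) < x j₀) :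
    ∃ y z : Fin d → ℤ, y ∈ intCone B₁ ∩ intCone B₂ ∧ z ∈ intCone B₁ ∩ intCone B₂ ∧
      y ≠ 0 ∧ z ≠ 0 ∧ x = y + z := by
  classical
  obtain ⟨n₁, f₁, hf₁, hx₁⟩ := (intCone_iff_fam B₁ x).mp hx1
  obtain ⟨n₂, f₂, hf₂, hx₂⟩ := (intCone_iff_fam B₂ x).mp hx2
  set u : ({i : Fin n₁ // f₁ i ≠ 0} ⊕ {i : Fin n₂ // f₂ i ≠ 0}) → (Fin d → ℤ) :=
    Sum.elim (fun i => f₁ i.1) (fun i => -(f₂ i.1)) with hu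
  -- sums over the nonzero indices
  have hs1 : ∑ i : {i : Fin n₁ // f₁ i ≠ 0}, f₁ i.1 = x := by
    rw [← Finset.sum_subtype (Finset.univ.filter (fun i => f₁ i ≠ 0))
      (by intro i; simp) (fun i => f₁ i)]
    rw [Finset.sum_filter_ne_zero, hx₁]
  have hs2 : ∑ i : {i : Fin n₂ // f₂ i ≠ 0}, f₂ i.1 = x := by
    rw [← Finset.sum_subtype (Finset.univ.filter (fun i => f₂ i ≠ 0))
      (by intro i; simp) (fun i => f₂ i)]
    rw [Finset.sum_filter_ne_zero, hx₂]
  have hbd' : ∀ i j, |u i j| ≤ (Δ : ℤ) := by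
    rintro (a | b) j
    · exact hbd _ (Finset.mem_union_left _ (hf₁ a.1)) j
    · show |(-(f₂ b.1)) j| ≤ (Δ : ℤ)
      rw [Pi.neg_apply, abs_neg]
      exact hbd _ (Finset.mem_union_right _ (hf₂ b.1)) j
  have hzero : ∑ i, u i = 0 := by
    rw [Fintype.sum_sum_type]
    simp only [hu, Sum.elim_inl, Sum.elim_inr]
    rw [hs1, Finset.sum_neg_distrib, hs2]
    ring
  -- the first part is large
  set N := Fintype.card {i : Fin n₁ // f₁ i ≠ 0} with hN
  have hxle : x j₀ ≤ (N : ℤ) * Δ := by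
    have hxx : x j₀ = ∑ i : {i : Fin n₁ // f₁ i ≠ 0}, f₁ i.1 j₀ := by
      rw [← hs1, Finset.sum_apply]
    rw [hxx]
    calc ∑ i : {i : Fin n₁ // f₁ i ≠ 0}, f₁ i.1 j₀
        ≤ ∑ _i : {i : Fin n₁ // f₁ i ≠ 0}, (Δ : ℤ) := by
          apply Finset.sum_le_sum
          intro i _
          exact le_of_abs_le (hbd _ (Finset.mem_union_left _ (hf₁ i.1)) j₀)
      _ = (N : ℤ) * Δ := by rw [Finset.sum_const, Finset.card_univ, nsmul_eq_mul]
  have hNbig : ((2 * d * Δ + 1) ^ d : ℕ) < N := by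
    have h1 : ((((2 * d * Δ + 1) ^ d : ℕ)) : ℤ) * Δ < (N:ℤ) * Δ := by
      calc (((2 * d * Δ + 1) ^ d : ℕ) : ℤ) * Δ = (Δ:ℤ) * ((2 * d * Δ + 1) ^ d : ℕ) := by ring
        _ < x j₀ := hbig
        _ ≤ (N : ℤ) * Δ := hxle
    have h2 : ((((2 * d * Δ + 1) ^ d : ℕ)) : ℤ) < (N:ℤ) := by
      have hΔ' : (0:ℤ) < Δ := by exact_mod_cast hΔ
      exact lt_of_mul_lt_mul_right h1 (le_of_lt hΔ')
    exact_mod_cast h2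
  set n := Fintype.card ({i : Fin n₁ // f₁ i ≠ 0} ⊕ {i : Fin n₂ // f₂ i ≠ 0}) with hn
  have hNn : N ≤ n := by
    rw [hn, Fintype.card_sum]
    omega
  -- Steinitz chain and pigeonhole
  obtain ⟨g, hmono, hcards, hgbd⟩ := steinitz_chain Δ u hbd' hzero
  set box : Finset (Fin d → ℤ) :=
    Finset.Icc (fun _ => -((d:ℤ) * Δ)) (fun _ => (d:ℤ) * Δ) with hbox
  have hboxcard : box.card = (2 * d * Δ + 1) ^ d := by
    rw [hbox, Pi.card_Icc]
    have hcc : ∀ j : Fin d, (Finset.Icc (-((d:ℤ) * Δ)) ((d:ℤ) * Δ)).card = 2 * d * Δ + 1 := by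
      intro j
      rw [Int.card_Icc]
      have : ((d:ℤ) * Δ + 1 - -((d:ℤ) * Δ)) = ((2 * d * Δ + 1 : ℕ) : ℤ) := by push_cast; ring
      rw [this, Int.toNat_natCast]
    rw [Finset.prod_congr rfl (fun j _ => hcc j), Finset.prod_const, Finset.card_univ,
      Fintype.card_fin]
  have hmaps : ∀ k ∈ Finset.range n, (∑ i ∈ g k, u i) ∈ box := by
    intro k _
    rw [hbox, Finset.mem_Icc]
    constructor
    · intro j
      have h := (abs_le.mp (hgbd k j)).1
      rw [Finset.sum_apply]
      exact h
    · intro j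
      have h := (abs_le.mp (hgbd k j)).2
      rw [Finset.sum_apply]
      exact h
  have hcardlt : box.card < (Finset.range n).card := by
    rw [hboxcard, Finset.card_range]
    omega
  obtain ⟨k, hk, k', hk', hkne, hkeq⟩ :=
    Finset.exists_ne_map_eq_of_card_lt_of_maps_to hcardlt hmaps
  rw [Finset.mem_range] at hk hk'
  -- reduce to the case k < k'
  have key : ∀ k k' : ℕ, k < k' → k' < n → (∑ i ∈ g k, u i) = (∑ i ∈ g k', u i) →
      ∃ y z : Fin d → ℤ, y ∈ intCone B₁ ∩ intCone B₂ ∧ z ∈ intCone B₁ ∩ intCone B₂ ∧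
        y ≠ 0 ∧ z ≠ 0 ∧ x = y + z := by
    clear hkne hkeq hk hk' k k'
    intro k k' hkk' hk'n heq
    have hsubT : g k ⊆ g k' := hmono (le_of_lt hkk')
    set T := g k' \ g k with hT
    have hTcard : T.card = k' - k := by
      rw [hT, Finset.card_sdiff_of_subset hsubT, hcards k' (le_of_lt hk'n),
        hcards k (by omega)]
    have hTne : T.Nonempty := by
      rw [← Finset.card_pos, hTcard]
      omega
    have hTsum : ∑ i ∈ T, u i = 0 := by
      rw [hT, Finset.sum_sdiff_eq_sub hsubT, heq, sub_self]
    set T₁ := T.toLeft with hT₁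
    set T₂ := T.toRight with hT₂
    have hTds : T₁.disjSum T₂ = T := Finset.toLeft_disjSum_toRight
    have hsplit : ∑ i ∈ T₁, f₁ i.1 = ∑ i ∈ T₂, f₂ i.1 := by
      rw [← hTds, Finset.sum_disjSum] at hTsum
      simp only [hu, Sum.elim_inl, Sum.elim_inr] at hTsum
      rw [Finset.sum_neg_distrib] at hTsum
      linear_combination (norm := module) hTsum
    have hz1 : x - ∑ i ∈ T₁, f₁ i.1 = ∑ i ∈ Finset.univ \ T₁, f₁ i.1 := by
      rw [Finset.sum_sdiff_eq_sub (Finset.subset_univ T₁), hs1]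
    have hz2 : x - ∑ i ∈ T₁, f₁ i.1 = ∑ i ∈ Finset.univ \ T₂, f₂ i.1 := by
      rw [Finset.sum_sdiff_eq_sub (Finset.subset_univ T₂), hs2, hsplit]
    refine ⟨∑ i ∈ T₁, f₁ i.1, x - ∑ i ∈ T₁, f₁ i.1, ?_, ?_, ?_, ?_, by ring⟩
    · constructor
      · exact intCone_sum_mem T₁ _ (fun i _ => hf₁ i.1)
      · rw [hsplit]
        exact intCone_sum_mem T₂ _ (fun i _ => hf₂ i.1)
    · constructor
      · rw [hz1]
        exact intCone_sum_mem _ _ (fun i _ => hf₁ i.1)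
      · rw [hz2]
        exact intCone_sum_mem _ _ (fun i _ => hf₂ i.1)
    · -- y ≠ 0
      obtain ⟨i, hiT⟩ := hTne
      match i with
      | Sum.inl a =>
        have ha : a ∈ T₁ := by rw [hT₁, Finset.mem_toLeft]; exact hiT
        exact sum_ne_zero_vec T₁ ⟨a, ha⟩ _ (fun i _ => i.2)
          (fun i _ j => hnn _ (Finset.mem_union_left _ (hf₁ i.1)) j)
      | Sum.inr b =>
        have hb : b ∈ T₂ := by rw [hT₂, Finset.mem_toRight]; exact hiT
        rw [hsplit]
        exact sum_ne_zero_vec T₂ ⟨b, hb⟩ _ (fun i _ => i.2)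
          (fun i _ j => hnn _ (Finset.mem_union_right _ (hf₂ i.1)) j)
    · -- z ≠ 0
      have hgne : (Finset.univ \ g k').Nonempty := by
        rw [Finset.sdiff_nonempty]
        intro hsub
        have hcu : (g k').card = n := by
          have : g k' = Finset.univ := Finset.univ_subset_iff.mp hsub
          rw [this, Finset.card_univ]
        rw [hcards k' (le_of_lt hk'n)] at hcu
        omega
      obtain ⟨i, hi⟩ := hgne
      have hiT : i ∉ T := by
        intro h
        exact (Finset.mem_sdiff.mp hi).2 ((Finset.sdiff_subset) h)
      match i with
      | Sum.inl a =>
        have ha : a ∈ Finset.univ \ T₁ := by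
          rw [Finset.mem_sdiff]
          refine ⟨Finset.mem_univ _, ?_⟩
          rw [hT₁, Finset.mem_toLeft]
          exact hiT
        rw [hz1]
        exact sum_ne_zero_vec _ ⟨a, ha⟩ _ (fun i _ => i.2)
          (fun i _ j => hnn _ (Finset.mem_union_left _ (hf₁ i.1)) j)
      | Sum.inr b =>
        have hb : b ∈ Finset.univ \ T₂ := by
          rw [Finset.mem_sdiff]
          refine ⟨Finset.mem_univ _, ?_⟩
          rw [hT₂, Finset.mem_toRight]
          exact hiT
        rw [hz2]
        exact sum_ne_zero_vec _ ⟨b, hb⟩ _ (fun i _ => i.2)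
          (fun i _ j => hnn _ (Finset.mem_union_right _ (hf₂ i.1)) j)
  rcases lt_or_gt_of_ne hkne with h | h
  · exact key k k' h hk' hkeq
  · exact key k' k h hk hkeq.symm

lemma intCone_nonneg {d : ℕ} {B : Finset (Fin d → ℤ)} (hnn : ∀ v ∈ B, ∀ j, 0 ≤ v j)
    {x : Fin d → ℤ} (hx : x ∈ intCone B) : ∀ j, 0 ≤ x j := by
  obtain ⟨lam, rfl⟩ := hx
  intro j
  rw [Finset.sum_apply]
  apply Finset.sum_nonneg
  intro v hv
  have : ((lam v : ℤ) • v) j = (lam v : ℤ) * v j := rfl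
  rw [this]
  exact mul_nonneg (by positivity) (hnn v hv j)

/-- the intersection of two integer cones generated by
nonnegative integer vectors of infinity norm at most `Δ` is again an integer
cone, generated by a finite set `B̂` of indecomposable elements of the
intersection, all of infinity norm at most `Δ(2dΔ+1)^d`; moreover every
indecomposable element of the intersection obeys this norm bound. -/
theorem intersection_two_cones_is_cone
    (d Δ : ℕ) (hd : 1 ≤ d) (hΔ : 1 ≤ Δ)
    (B₁ B₂ : Finset (Fin d → ℤ))
    (hnn : ∀ x ∈ B₁ ∪ B₂, ∀ j, 0 ≤ x j)
    (hbd : ∀ x ∈ B₁ ∪ B₂, ∀ j, |x j| ≤ (Δ : ℤ)) :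
    ∃ Bhat : Finset (Fin d → ℤ),
      (∀ b ∈ Bhat, ∀ j, 0 ≤ b j) ∧
      (∀ b ∈ Bhat, ∀ j, |b j| ≤ (Δ : ℤ) * (((2 * d * Δ + 1) ^ d : ℕ) : ℤ)) ∧
      (∀ b ∈ Bhat, Indecomp (intCone B₁ ∩ intCone B₂) b) ∧
      intCone Bhat = intCone B₁ ∩ intCone B₂ ∧
      (∀ b, Indecomp (intCone B₁ ∩ intCone B₂) b →
        ∀ j, |b j| ≤ (Δ : ℤ) * (((2 * d * Δ + 1) ^ d : ℕ) : ℤ)) := by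
  classical
  set M : ℤ := (Δ : ℤ) * (((2 * d * Δ + 1) ^ d : ℕ) : ℤ) with hM
  set C : Set (Fin d → ℤ) := intCone B₁ ∩ intCone B₂ with hC
  have hCnn : ∀ x ∈ C, ∀ j, 0 ≤ x j := by
    intro x hx
    exact intCone_nonneg (fun v hv => hnn v (Finset.mem_union_left _ hv)) hx.1
  have hIndBound : ∀ b, Indecomp C b → ∀ j, |b j| ≤ M := by
    intro b hb j
    have hbnn := hCnn b hb.1
    rw [abs_of_nonneg (hbnn j)]
    by_contra hlt
    push_neg at hlt
    obtain ⟨y, z, hy, hz, hy0, hz0, heq⟩ :=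
      decompose_of_large hΔ B₁ B₂ hnn hbd b hb.1.1 hb.1.2 j (by rw [← hM]; exact hlt)
    exact hb.2.2 y z hy hz hy0 hz0 heq
  set Bhat : Finset (Fin d → ℤ) :=
    (Finset.Icc (0 : Fin d → ℤ) (fun _ => M)).filter (fun b => Indecomp C b) with hBhat
  have hmem_iff : ∀ b, b ∈ Bhat ↔
      (b ∈ Finset.Icc (0 : Fin d → ℤ) (fun _ => M) ∧ Indecomp C b) := by
    intro b
    rw [hBhat, Finset.mem_filter]
  have hmem_ind : ∀ b, Indecomp C b → b ∈ Bhat := by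
    intro b hb
    rw [hmem_iff]
    refine ⟨Finset.mem_Icc.mpr ⟨?_, ?_⟩, hb⟩
    · intro j
      exact hCnn b hb.1 j
    · intro j
      exact le_of_abs_le (hIndBound b hb j)
  have hBhatC : ∀ b ∈ Bhat, b ∈ C := by
    intro b hb
    exact ((hmem_iff b).mp hb).2.1
  -- total-sum based strong induction for generation
  have key : ∀ (t : ℕ) (x : Fin d → ℤ), x ∈ C → (∑ j, x j).toNat ≤ t → x ∈ intCone Bhat := by
    intro t
    induction t with
    | zero =>
        intro x hx hle
        have hxnn := hCnn x hx
        have hx0 : x = 0 := by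
          by_contra h
          have := total_pos hxnn h
          omega
        rw [hx0]
        exact intCone_zero Bhat
    | succ t ih =>
        intro x hx hle
        by_cases hx0 : x = 0
        · rw [hx0]; exact intCone_zero Bhat
        by_cases hind : Indecomp C x
        · exact intCone_gen (hmem_ind x hind)
        · have hdec : ∃ y z : Fin d → ℤ, y ∈ C ∧ z ∈ C ∧ y ≠ 0 ∧ z ≠ 0 ∧ x = y + z := by
            unfold Indecomp at hind
            push_neg at hind
            obtain ⟨y, z, hyC, hzC, hy0, hz0, heq⟩ := hind hx hx0
            exact ⟨y, z, hyC, hzC, hy0, hz0, heq⟩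
          obtain ⟨y, z, hyC, hzC, hy0, hz0, heq⟩ := hdec
          have hyt := total_pos (hCnn y hyC) hy0
          have hzt := total_pos (hCnn z hzC) hz0
          have hsplit : ∑ j, x j = (∑ j, y j) + (∑ j, z j) := by
            rw [heq, ← Finset.sum_add_distrib]
            apply Finset.sum_congr rfl
            intro j _
            rfl
          have hyle : (∑ j, y j).toNat ≤ t := by omega
          have hzle : (∑ j, z j).toNat ≤ t := by omega
          rw [heq]
          exact intCone_add (ih y hyC hyle) (ih z hzC hzle)
  refine ⟨Bhat, ?_, ?_, ?_, ?_, ?_⟩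
  · intro b hb j
    exact hCnn b (hBhatC b hb) j
  · intro b hb j
    exact hIndBound b ((hmem_iff b).mp hb).2 j
  · intro b hb
    exact ((hmem_iff b).mp hb).2
  · apply Set.Subset.antisymm
    · intro x hx
      obtain ⟨n, f, hf, rfl⟩ := (intCone_iff_fam Bhat x).mp hx
      apply Finset.sum_induction f (· ∈ C)
      · intro a b ha hb
        exact ⟨intCone_add ha.1 hb.1, intCone_add ha.2 hb.2⟩
      · exact ⟨intCone_zero B₁, intCone_zero B₂⟩
      · intro i _
        exact hBhatC (f i) (hf i)
    · intro x hx
      exact key (∑ j, x j).toNat x hx le_rfl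
  · exact hIndBound
end

section
/- Let d ≥ 1, Δ ≥ 0, L ≥ 1, and let v_1, …, v_L ∈ ℤ^d be vectors with ‖v_i‖_∞ ≤ Δ for all i, and let b = v_1 + … + v_L. Then there exists a permutation π of {1, …, L} such that for every 1 ≤ m ≤ L the partial sum satisfies ‖ Σ_{i=1}^m v_{π(i)} − (m/L)·b ‖_∞ ≤ 4Δ(d+1); that is, the vectors can be reordered so that every partial sum stays within ∞-distance 4Δ(d+1) of the line segment from 0 to b. -/
namespace SteinitzAux

open Finset
open scoped Classical

noncomputable section

variable {d L : ℕ}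

def Feas (u : Fin L → Fin d → ℝ) (A : Finset (Fin L)) (s : ℝ) (l : Fin L → ℝ) : Prop :=
  (∀ i ∈ A, 0 ≤ l i ∧ l i ≤ 1) ∧ (∑ i ∈ A, l i = s) ∧
    ∀ j, ∑ i ∈ A, l i * u i j = (s / L) * ∑ i, u i j

def intg (A : Finset (Fin L)) (l : Fin L → ℝ) : Finset (Fin L) :=
  A.filter (fun i => l i = 0 ∨ l i = 1)

def frac (A : Finset (Fin L)) (l : Fin L → ℝ) : Finset (Fin L) :=
  A.filter (fun i => ¬ (l i = 0 ∨ l i = 1))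

lemma intg_add_frac (A : Finset (Fin L)) (l : Fin L → ℝ) :
    (intg A l).card + (frac A l).card = A.card :=
  Finset.card_filter_add_card_filter_not _

lemma kernel (u : Fin L → Fin d → ℝ) (F : Finset (Fin L)) (hF : d + 1 < F.card) :
    ∃ μ : Fin L → ℝ, (∀ i, i ∉ F → μ i = 0) ∧ (∃ i ∈ F, μ i ≠ 0) ∧
      (∑ i ∈ F, μ i = 0) ∧ ∀ j, ∑ i ∈ F, μ i * u i j = 0 := by
  have hrk : Module.finrank ℝ ((Fin d → ℝ) × ℝ) = d + 1 := by simp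
  have hnli : ¬ LinearIndependent ℝ (fun i : {x // x ∈ F} => ((u i.1, 1) : (Fin d → ℝ) × ℝ)) := by
    intro h
    have := h.fintype_card_le_finrank
    rw [hrk, Fintype.card_coe] at this
    omega
  obtain ⟨g, hg0, ⟨i₀, hi₀⟩⟩ := Fintype.not_linearIndependent_iff.mp hnli
  classical
  refine ⟨fun i => if h : i ∈ F then g ⟨i, h⟩ else 0, ?_, ?_, ?_, ?_⟩
  · intro i hi; simp [hi]
  · exact ⟨i₀.1, i₀.2, by simpa using hi₀⟩
  · have h2 := congrArg Prod.snd hg0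
    rw [Prod.snd_sum] at h2
    simp only [Prod.smul_mk, smul_eq_mul, mul_one, Prod.snd_zero] at h2
    rw [← Finset.sum_attach F (fun i => if h : i ∈ F then g ⟨i, h⟩ else 0)]
    simpa using h2
  · intro j
    have h1 := congrArg Prod.fst hg0
    rw [Prod.fst_sum] at h1
    have h1j := congrFun h1 j
    simp only [Prod.smul_mk, Pi.smul_apply, smul_eq_mul, Finset.sum_apply, Pi.zero_apply,
      Prod.fst_zero] at h1j
    rw [← Finset.sum_attach F (fun i => (if h : i ∈ F then g ⟨i, h⟩ else 0) * u i j)]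
    simpa using h1j


lemma improve (u : Fin L → Fin d → ℝ) (A : Finset (Fin L)) (s : ℝ) (l : Fin L → ℝ)
    (h : Feas u A s l) (hF : d + 1 < (frac A l).card) :
    ∃ l', Feas u A s l' ∧ (intg A l).card < (intg A l').card := by
  obtain ⟨hbox, hsum, hmom⟩ := h
  have hFA : frac A l ⊆ A := Finset.filter_subset _ _
  obtain ⟨μ, hsupp, ⟨iw, hiwF, hiw⟩, hμsum, hμmom⟩ := kernel u (frac A l) hF
  have hopen : ∀ i ∈ frac A l, 0 < l i ∧ l i < 1 := by
    intro i hi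
    rw [frac, Finset.mem_filter] at hi
    push_neg at hi
    obtain ⟨hiA, h0, h1⟩ := hi
    obtain ⟨ha, hb⟩ := hbox i hiA
    exact ⟨lt_of_le_of_ne ha (Ne.symm h0), lt_of_le_of_ne hb h1⟩
  set F' := (frac A l).filter (fun i => μ i ≠ 0) with hF'def
  have hne : F'.Nonempty := ⟨iw, by simp [hF'def, hiwF, hiw]⟩
  set step : Fin L → ℝ := fun i => if 0 < μ i then (1 - l i) / μ i else l i / (-μ i) with hstep
  have hstep_pos : ∀ i ∈ F', 0 < step i := by
    intro i hi
    rw [hF'def, Finset.mem_filter] at hi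
    obtain ⟨hiF, hiμ⟩ := hi
    obtain ⟨h0, h1⟩ := hopen i hiF
    show (0:ℝ) < if 0 < μ i then (1 - l i) / μ i else l i / (-μ i)
    rcases lt_or_gt_of_ne hiμ with hneg | hpos
    · rw [if_neg (not_lt.mpr hneg.le)]
      exact div_pos h0 (by linarith)
    · rw [if_pos hpos]
      exact div_pos (by linarith) hpos
  obtain ⟨i₀, hi₀F', hi₀⟩ := Finset.exists_mem_eq_inf' hne step
  set t := F'.inf' hne step with ht
  have htpos : 0 < t := (Finset.lt_inf'_iff hne).mpr fun i hi => hstep_pos i hi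
  have htle : ∀ i ∈ F', t ≤ step i := fun i hi => Finset.inf'_le _ hi
  have hsupp' : ∀ i, i ∉ F' → μ i = 0 := by
    intro i hi
    by_contra hμi
    exact hi (Finset.mem_filter.mpr ⟨by_contra fun hF => hμi (hsupp i hF), hμi⟩)
  have hμA : ∑ i ∈ A, μ i = 0 := by
    rw [← Finset.sum_subset hFA (fun i _ hiF => hsupp i hiF)]; exact hμsum
  have hμAmom : ∀ j, ∑ i ∈ A, μ i * u i j = 0 := by
    intro j
    rw [← Finset.sum_subset hFA (fun i _ hiF => by rw [hsupp i hiF, zero_mul])]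
    exact hμmom j
  -- key pointwise facts about the new weights
  have hbox' : ∀ i ∈ A, 0 ≤ l i + t * μ i ∧ l i + t * μ i ≤ 1 := by
    intro i hiA
    by_cases hiF' : i ∈ F'
    · have hμi : μ i ≠ 0 := (Finset.mem_filter.mp hiF').2
      have hiF : i ∈ frac A l := (Finset.mem_filter.mp hiF').1
      obtain ⟨h0, h1⟩ := hopen i hiF
      have hts := htle i hiF'
      rcases lt_or_gt_of_ne hμi with hneg | hpos
      · have hs : step i = l i / (-μ i) := by
          show (if 0 < μ i then (1 - l i) / μ i else l i / (-μ i)) = _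
          rw [if_neg (not_lt.mpr hneg.le)]
        have h3 : step i * (-μ i) = l i := by
          rw [hs]; field_simp
        have h4 : t * (-μ i) ≤ step i * (-μ i) :=
          mul_le_mul_of_nonneg_right hts (by linarith)
        constructor
        · nlinarith
        · nlinarith
      · have hs : step i = (1 - l i) / μ i := by
          show (if 0 < μ i then (1 - l i) / μ i else l i / (-μ i)) = _
          rw [if_pos hpos]
        have h3 : step i * μ i = 1 - l i := by
          rw [hs]; field_simp
        have h4 : t * μ i ≤ step i * μ i := mul_le_mul_of_nonneg_right hts hpos.le
        constructor
        · nlinarith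
        · nlinarith
    · rw [hsupp' i hiF', mul_zero, add_zero]; exact hbox i hiA
  refine ⟨fun i => l i + t * μ i, ⟨hbox', ?_, ?_⟩, ?_⟩
  · simp only [Finset.sum_add_distrib, ← Finset.mul_sum, hμA, mul_zero, add_zero, hsum]
  · intro j
    have e : ∀ i, (l i + t * μ i) * u i j = l i * u i j + t * (μ i * u i j) := by intro i; ring
    simp only [e, Finset.sum_add_distrib, ← Finset.mul_sum, hμAmom j, mul_zero, add_zero]
    exact hmom j
  · have hi₀F : i₀ ∈ frac A l := (Finset.mem_filter.mp hi₀F').1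
    have hi₀A : i₀ ∈ A := hFA hi₀F
    have hμ₀ : μ i₀ ≠ 0 := (Finset.mem_filter.mp hi₀F').2
    have hi₀int : l i₀ + t * μ i₀ = 0 ∨ l i₀ + t * μ i₀ = 1 := by
      rcases lt_or_gt_of_ne hμ₀ with hneg | hpos
      · left
        have hs : t = l i₀ / (-μ i₀) := by
          rw [hi₀]
          show (if 0 < μ i₀ then (1 - l i₀) / μ i₀ else l i₀ / (-μ i₀)) = _
          rw [if_neg (not_lt.mpr hneg.le)]
        have hne0 : μ i₀ < 0 := hneg
        have h5 : l i₀ / -μ i₀ * -μ i₀ = l i₀ := div_mul_cancel₀ _ (neg_ne_zero.mpr hμ₀)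
        rw [hs]
        linarith [h5]
      · right
        have hs : t = (1 - l i₀) / μ i₀ := by
          rw [hi₀]
          show (if 0 < μ i₀ then (1 - l i₀) / μ i₀ else l i₀ / (-μ i₀)) = _
          rw [if_pos hpos]
        rw [hs]
        field_simp
        ring
    have hsub : insert i₀ (intg A l) ⊆ intg A (fun i => l i + t * μ i) := by
      intro i hi
      rcases Finset.mem_insert.mp hi with rfl | hi
      · exact Finset.mem_filter.mpr ⟨hi₀A, hi₀int⟩
      · rw [intg, Finset.mem_filter] at hi
        obtain ⟨hiA, hii⟩ := hi
        have hiF : i ∉ frac A l := by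
          rw [frac, Finset.mem_filter]
          push_neg
          intro _
          exact hii
        have hzero : μ i = 0 := hsupp i hiF
        refine Finset.mem_filter.mpr ⟨hiA, ?_⟩
        show l i + t * μ i = 0 ∨ l i + t * μ i = 1
        rw [hzero, mul_zero, add_zero]
        exact hii
    have hi₀notint : i₀ ∉ intg A l := by
      rw [intg, Finset.mem_filter]
      rw [frac, Finset.mem_filter] at hi₀F
      tauto
    calc (intg A l).card < (insert i₀ (intg A l)).card := by
          rw [Finset.card_insert_of_notMem hi₀notint]; omega
      _ ≤ (intg A (fun i => l i + t * μ i)).card := Finset.card_le_card hsub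

lemma reduce (u : Fin L → Fin d → ℝ) (A : Finset (Fin L)) (s : ℝ) :
    ∀ (n : ℕ) (l : Fin L → ℝ), Feas u A s l → (frac A l).card ≤ n →
      ∃ l', Feas u A s l' ∧ (frac A l').card ≤ d + 1 := by
  intro n
  induction n with
  | zero => intro l hF hc; exact ⟨l, hF, by omega⟩
  | succ n ih =>
    intro l hF hc
    by_cases hle : (frac A l).card ≤ d + 1
    · exact ⟨l, hF, hle⟩
    · push_neg at hle
      obtain ⟨l'', hF'', hlt⟩ := improve u A s l hF hle
      apply ih l'' hF''
      have e1 := intg_add_frac A l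
      have e2 := intg_add_frac A l''
      have h3 : (intg A l'').card ≤ A.card := Finset.card_le_card (Finset.filter_subset _ _)
      omega

def IsGood (u : Fin L → Fin d → ℝ) (A : Finset (Fin L)) : Prop :=
  ∃ l, Feas u A ((A.card : ℝ) - d) l

lemma descent (u : Fin L → Fin d → ℝ) (A : Finset (Fin L)) (hA : d < A.card)
    (hG : IsGood u A) : ∃ i ∈ A, IsGood u (A.erase i) := by
  obtain ⟨l, hbox, hsum, hmom⟩ := hG
  have hk1 : 1 ≤ A.card := by omega
  have hkd : (0:ℝ) < (A.card:ℝ) - d := by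
    have : (d:ℝ) < (A.card:ℝ) := by exact_mod_cast hA
    linarith
  set s : ℝ := (A.card:ℝ) - 1 - d with hs
  have hs0 : 0 ≤ s := by
    have : (d:ℝ) + 1 ≤ (A.card:ℝ) := by exact_mod_cast hA
    rw [hs]; linarith
  set c : ℝ := s / ((A.card:ℝ) - d) with hc
  have hc0 : 0 ≤ c := div_nonneg hs0 hkd.le
  have hc1 : c ≤ 1 := by
    rw [hc, div_le_one hkd]
    rw [hs]; linarith
  have hcs : c * ((A.card:ℝ) - d) = s := div_mul_cancel₀ _ hkd.ne'
  have hFeas0 : Feas u A s (fun i => c * l i) := by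
    refine ⟨?_, ?_, ?_⟩
    · intro i hiA
      obtain ⟨h0, h1⟩ := hbox i hiA
      constructor
      · positivity
      · calc c * l i ≤ 1 * 1 := mul_le_mul hc1 h1 h0 zero_le_one
        _ = 1 := by ring
    · rw [← Finset.mul_sum, hsum, hcs]
    · intro j
      have e : ∀ i, c * l i * u i j = c * (l i * u i j) := fun i => by ring
      simp only [e, ← Finset.mul_sum, hmom j]
      rw [← mul_assoc, ← mul_div_assoc, hcs]
  obtain ⟨l', hFeas', hfrac'⟩ := reduce u A s (frac A (fun i => c * l i)).card
    (fun i => c * l i) hFeas0 le_rfl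
  obtain ⟨hbox', hsum', hmom'⟩ := hFeas'
  have hzero : ∃ i ∈ A, l' i = 0 := by
    by_contra hno
    push_neg at hno
    set O := A.filter (fun i => l' i = 1) with hO
    have hOsub : O ⊆ A := Finset.filter_subset _ _
    have hOI : intg A l' ⊆ O := by
      intro i hi
      rw [intg, Finset.mem_filter] at hi
      obtain ⟨hiA, hii⟩ := hi
      rcases hii with h0 | h1
      · exact absurd h0 (hno i hiA)
      · exact Finset.mem_filter.mpr ⟨hiA, h1⟩
    have hcardO : A.card ≤ O.card + (d + 1) := by
      have e1 := intg_add_frac A l'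
      have e2 := Finset.card_le_card hOI
      omega
    have hOreal : s ≤ (O.card : ℝ) := by
      have : (A.card : ℝ) ≤ (O.card : ℝ) + (d + 1) := by exact_mod_cast hcardO
      rw [hs]; linarith
    have hsum_O : ∑ i ∈ O, l' i = (O.card : ℝ) := by
      rw [Finset.sum_congr rfl (fun i hi => (Finset.mem_filter.mp hi).2),
        Finset.sum_const, nsmul_eq_mul, mul_one]
    have hsdiff : ∑ i ∈ A \ O, l' i + ∑ i ∈ O, l' i = ∑ i ∈ A, l' i :=
      Finset.sum_sdiff hOsub
    have hrest_nonneg : ∀ i ∈ A \ O, 0 ≤ l' i := by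
      intro i hi
      exact (hbox' i (Finset.mem_sdiff.mp hi).1).1
    have hrest_zero : ∑ i ∈ A \ O, l' i = 0 := by
      have h1 : ∑ i ∈ A \ O, l' i ≤ 0 := by
        rw [hsum'] at hsdiff
        linarith
      have h2 : 0 ≤ ∑ i ∈ A \ O, l' i := Finset.sum_nonneg hrest_nonneg
      linarith
    have hOlt : (O.card : ℝ) < (A.card : ℝ) := by
      have h3 : (O.card : ℝ) ≤ s := by
        have h4 : ∑ i ∈ O, l' i ≤ ∑ i ∈ A, l' i :=
          Finset.sum_le_sum_of_subset_of_nonneg hOsub (fun i hiA _ => (hbox' i hiA).1)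
        rw [hsum_O, hsum'] at h4
        exact h4
      rw [hs] at h3
      have : (0:ℝ) ≤ (d : ℝ) := by positivity
      linarith
    have hOltn : O.card < A.card := by exact_mod_cast hOlt
    have hAOne : (A \ O).Nonempty := by
      rw [← Finset.card_pos, Finset.card_sdiff_of_subset hOsub]
      omega
    obtain ⟨i, hi⟩ := hAOne
    have : l' i = 0 :=
      (Finset.sum_eq_zero_iff_of_nonneg hrest_nonneg).mp hrest_zero i hi
    exact hno i (Finset.mem_sdiff.mp hi).1 this
  obtain ⟨i, hiA, hi0⟩ := hzero
  refine ⟨i, hiA, l', ?_, ?_, ?_⟩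
  · intro i' hi'
    exact hbox' i' (Finset.mem_of_mem_erase hi')
  · rw [Finset.sum_erase A hi0, hsum', Finset.card_erase_of_mem hiA, hs]
    have : ((A.card - 1 : ℕ) : ℝ) = (A.card : ℝ) - 1 := by
      push_cast [hk1]
      ring
    rw [this]
  · intro j
    have h0 : l' i * u i j = 0 := by rw [hi0, zero_mul]
    rw [Finset.sum_erase A h0, hmom' j, Finset.card_erase_of_mem hiA]
    have : ((A.card - 1 : ℕ) : ℝ) = (A.card : ℝ) - 1 := by
      push_cast [hk1]
      ring
    rw [this, hs]

lemma good_univ (u : Fin L → Fin d → ℝ) (h0L : 0 < L) (hdL : d ≤ L) :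
    IsGood u (Finset.univ : Finset (Fin L)) := by
  have hcard : (Finset.univ : Finset (Fin L)).card = L := by
    rw [Finset.card_univ, Fintype.card_fin]
  have hL0 : (0:ℝ) < L := by exact_mod_cast h0L
  have hdL' : (d:ℝ) ≤ L := by exact_mod_cast hdL
  refine ⟨fun _ => ((L:ℝ) - d) / L, ?_, ?_, ?_⟩
  · intro i _
    constructor
    · apply div_nonneg (by linarith) hL0.le
    · rw [div_le_one hL0]; linarith
  · rw [Finset.sum_const, hcard, nsmul_eq_mul]
    field_simp
  · intro j
    rw [← Finset.mul_sum, hcard]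

lemma chain_aux (u : Fin L → Fin d → ℝ) (h0L : 0 < L) :
    ∀ n : ℕ, ∃ A : ℕ → Finset (Fin L),
      (∀ k, L - n ≤ k → k ≤ L → (A k).card = k) ∧
      (∀ k, L - n ≤ k → k < L → A k ⊆ A (k+1)) ∧
      (∀ k, L - n ≤ k → k ≤ L → d ≤ k → IsGood u (A k)) := by
  intro n
  induction n with
  | zero =>
    refine ⟨fun _ => Finset.univ, ?_, ?_, ?_⟩
    · intro k hk1 hk2
      have : k = L := by omega
      subst this
      rw [Finset.card_univ, Fintype.card_fin]
    · intro k hk1 hk2; exact absurd hk2 (by omega)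
    · intro k hk1 hk2 hk3
      have : k = L := by omega
      subst this
      exact good_univ u h0L hk3
  | succ n ih =>
    obtain ⟨A, hcard, hsub, hgood⟩ := ih
    by_cases hLn : L ≤ n
    · refine ⟨A, ?_, ?_, ?_⟩
      · intro k hk1 hk2; exact hcard k (by omega) hk2
      · intro k hk1 hk2; exact hsub k (by omega) hk2
      · intro k hk1 hk2 hk3; exact hgood k (by omega) hk2 hk3
    · push_neg at hLn
      set k₀ := L - (n+1) with hk₀
      have hk₀1 : L - n = k₀ + 1 := by omega
      have hk₀L : k₀ + 1 ≤ L := by omega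
      have hcard1 : (A (k₀+1)).card = k₀ + 1 := hcard (k₀+1) (by omega) hk₀L
      have hpick : ∃ i ∈ A (k₀+1), (d ≤ k₀ → IsGood u ((A (k₀+1)).erase i)) := by
        by_cases hdk : d ≤ k₀
        · obtain ⟨i, hi, hgi⟩ := descent u (A (k₀+1)) (by omega) 
            (hgood (k₀+1) (by omega) hk₀L (by omega))
          exact ⟨i, hi, fun _ => hgi⟩
        · have : (A (k₀+1)).Nonempty := by
            rw [← Finset.card_pos, hcard1]; omega
          obtain ⟨i, hi⟩ := this
          exact ⟨i, hi, fun h => absurd h hdk⟩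
      obtain ⟨i, hiA, hgi⟩ := hpick
      classical
      refine ⟨fun k => if k = k₀ then (A (k₀+1)).erase i else A k, ?_, ?_, ?_⟩
      · intro k hk1 hk2
        dsimp only
        by_cases hkk : k = k₀
        · subst hkk
          rw [if_pos rfl, Finset.card_erase_of_mem hiA, hcard1]
          omega
        · rw [if_neg hkk]
          exact hcard k (by omega) hk2
      · intro k hk1 hk2
        dsimp only
        by_cases hkk : k = k₀
        · subst hkk
          rw [if_pos rfl, if_neg (by omega)]
          exact Finset.erase_subset _ _
        · rw [if_neg hkk, if_neg (by omega)]
          exact hsub k (by omega) hk2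
      · intro k hk1 hk2 hk3
        dsimp only
        by_cases hkk : k = k₀
        · subst hkk
          rw [if_pos rfl]
          exact hgi hk3
        · rw [if_neg hkk]
          exact hgood k (by omega) hk2 hk3

lemma chain_full (u : Fin L → Fin d → ℝ) (h0L : 0 < L) :
    ∃ A : ℕ → Finset (Fin L),
      (∀ k, k ≤ L → (A k).card = k) ∧
      (∀ k, k < L → A k ⊆ A (k+1)) ∧
      (∀ k, d ≤ k → k ≤ L → IsGood u (A k)) := by
  obtain ⟨A, h1, h2, h3⟩ := chain_aux u h0L L
  exact ⟨A, fun k hk => h1 k (by omega) hk, fun k hk => h2 k (by omega) hk,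
    fun k hk1 hk2 => h3 k (by omega) hk2 hk1⟩

end
end SteinitzAux


/-- vectors `v₁, …, v_L ∈ ℤ^d` of infinity norm at most `Δ` with
sum `b` can be permuted so that every partial sum stays within infinity
distance `4Δ(d+1)` of the segment from `0` to `b`, i.e. the `m`-th partial sum
is within `4Δ(d+1)` of `(m/L)·b`. -/
theorem steinitz_along_segment
    (d Δ L : ℕ) (hd : 1 ≤ d) (hL : 1 ≤ L)
    (v : Fin L → Fin d → ℤ) (hv : ∀ i j, |v i j| ≤ (Δ : ℤ)) :
    ∃ π : Equiv.Perm (Fin L), ∀ m : ℕ, 1 ≤ m → m ≤ L → ∀ j : Fin d,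
      |(∑ i ∈ Finset.univ.filter (fun i : Fin L => (i : ℕ) < m), ((v (π i) j : ℤ) : ℝ))
          - ((m : ℝ) / (L : ℝ)) * ((∑ i, v i j : ℤ) : ℝ)|
        ≤ 4 * (Δ : ℝ) * ((d : ℝ) + 1) := by
  classical
  set u : Fin L → Fin d → ℝ := fun i j => ((v i j : ℤ) : ℝ) with hu
  have hvu : ∀ i j, |u i j| ≤ (Δ : ℝ) := by
    intro i j
    have := hv i j
    show |((v i j : ℤ) : ℝ)| ≤ (Δ : ℝ)
    exact_mod_cast this
  have h0L : 0 < L := hL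
  have hL0R : (0:ℝ) < L := by exact_mod_cast hL
  have hΔ0 : (0:ℝ) ≤ Δ := by positivity
  have hd0 : (0:ℝ) ≤ d := by positivity
  obtain ⟨A, hcard, hstepsub, hgood⟩ := SteinitzAux.chain_full u h0L
  have hdiff : ∀ k : Fin L, ∃ x, x ∈ A ((k:ℕ)+1) \ A (k:ℕ) := by
    intro k
    have hk1 : (k:ℕ) + 1 ≤ L := k.isLt
    have hsubk := hstepsub (k:ℕ) k.isLt
    have hclt : (A (k:ℕ)).card < (A ((k:ℕ)+1)).card := by
      rw [hcard _ (by omega), hcard _ hk1]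
      omega
    have hss : A (k:ℕ) ⊂ A ((k:ℕ)+1) :=
      hsubk.ssubset_of_ne (by intro h; rw [h] at hclt; omega)
    obtain ⟨x, hx1, hx2⟩ := Finset.exists_of_ssubset hss
    exact ⟨x, Finset.mem_sdiff.mpr ⟨hx1, hx2⟩⟩
  choose f hf using hdiff
  have hmono : ∀ b, b ≤ L → ∀ a, a ≤ b → A a ⊆ A b := by
    intro b
    induction b with
    | zero =>
      intro _ a ha
      have : a = 0 := by omega
      subst this
      exact subset_rfl
    | succ b ihb =>
      intro hbL a hab
      rcases Nat.lt_or_ge a (b+1) with h | h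
      · exact (ihb (by omega) a (by omega)).trans (hstepsub b (by omega))
      · have : a = b + 1 := by omega
        subst this
        exact subset_rfl
  have hinj : Function.Injective f := by
    have key : ∀ a b : Fin L, (a:ℕ) < (b:ℕ) → f a ≠ f b := by
      intro a b hab hEq
      have h1 : f a ∈ A ((a:ℕ)+1) := (Finset.mem_sdiff.mp (hf a)).1
      have h2 : f b ∉ A (b:ℕ) := (Finset.mem_sdiff.mp (hf b)).2
      have h3 : A ((a:ℕ)+1) ⊆ A (b:ℕ) := hmono (b:ℕ) (le_of_lt b.isLt) ((a:ℕ)+1) (by omega)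
      exact h2 (hEq ▸ h3 h1)
    intro a b hEq
    rcases lt_trichotomy (a:ℕ) (b:ℕ) with h | h | h
    · exact absurd hEq (key a b h)
    · exact Fin.ext h
    · exact absurd hEq.symm (key b a h)
  have hbij : Function.Bijective f := (Fintype.bijective_iff_injective_and_card f).mpr ⟨hinj, rfl⟩
  refine ⟨Equiv.ofBijective f hbij, ?_⟩
  intro m hm1 hmL j
  have himg : ∀ m, m ≤ L → Finset.image f (Finset.univ.filter fun i : Fin L => (i:ℕ) < m) = A m := by
    intro m
    induction m with
    | zero =>
      intro _
      have h1 : (Finset.univ.filter fun i : Fin L => (i:ℕ) < 0) = ∅ := by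
        ext i; simp
      rw [h1, Finset.image_empty]
      symm
      rw [← Finset.card_eq_zero]
      exact hcard 0 (by omega)
    | succ m ihm =>
      intro hmL1
      have hmL' : m < L := by omega
      have hfil : (Finset.univ.filter fun i : Fin L => (i:ℕ) < m+1)
          = insert ⟨m, hmL'⟩ (Finset.univ.filter fun i : Fin L => (i:ℕ) < m) := by
        ext i
        simp only [Finset.mem_filter, Finset.mem_univ, true_and, Finset.mem_insert, Fin.ext_iff]
        omega
      rw [hfil, Finset.image_insert, ihm (by omega)]
      have hfm := hf ⟨m, hmL'⟩
      rw [Finset.mem_sdiff] at hfm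
      apply Finset.eq_of_subset_of_card_le
      · intro x hx
        rcases Finset.mem_insert.mp hx with rfl | hx
        · exact hfm.1
        · exact hstepsub m hmL' hx
      · rw [Finset.card_insert_of_notMem hfm.2, hcard m (by omega), hcard (m+1) (by omega)]
  have hsum_eq : (∑ i ∈ Finset.univ.filter (fun i : Fin L => (i:ℕ) < m), u (f i) j)
      = ∑ x ∈ A m, u x j := by
    rw [← himg m hmL]
    rw [Finset.sum_image (fun x _ y _ h => hinj h)]
  have hgoal_sum : (∑ i ∈ Finset.univ.filter (fun i : Fin L => (i : ℕ) < m),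
      ((v ((Equiv.ofBijective f hbij) i) j : ℤ) : ℝ)) = ∑ x ∈ A m, u x j := hsum_eq
  set b : ℝ := ∑ i, u i j with hb
  have hbcast : ((∑ i, v i j : ℤ) : ℝ) = b := by rw [hb, hu]; push_cast; rfl
  have hbabs : |b| ≤ (L:ℝ) * Δ := by
    rw [hb]
    calc |∑ i, u i j| ≤ ∑ i, |u i j| := Finset.abs_sum_le_sum_abs _ _
    _ ≤ ∑ _i : Fin L, (Δ:ℝ) := Finset.sum_le_sum (fun i _ => hvu i j)
    _ = (L:ℝ) * Δ := by
        rw [Finset.sum_const, Finset.card_univ, Fintype.card_fin, nsmul_eq_mul]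
  rw [hgoal_sum, hbcast]
  rcases le_or_gt d m with hdm | hdm
  · -- the interesting case: use goodness
    obtain ⟨l, hboxl, hsuml, hmoml⟩ := hgood m hdm hmL
    rw [hcard m hmL] at hsuml
    have hmomj := hmoml j
    rw [hcard m hmL, ← hb] at hmomj
    have hrw : ∑ x ∈ A m, u x j - ((m:ℝ)/L) * b
        = (∑ x ∈ A m, (1 - l x) * u x j) - ((d:ℝ)/L) * b := by
      have h1 : ∑ x ∈ A m, (1 - l x) * u x j
          = ∑ x ∈ A m, u x j - ∑ x ∈ A m, l x * u x j := by
        rw [← Finset.sum_sub_distrib]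
        apply Finset.sum_congr rfl
        intro x _
        ring
      rw [h1, hmomj]
      field_simp
      ring
    rw [hrw]
    have hA1 : |∑ x ∈ A m, (1 - l x) * u x j| ≤ (d:ℝ) * Δ := by
      calc |∑ x ∈ A m, (1 - l x) * u x j| ≤ ∑ x ∈ A m, |(1 - l x) * u x j| :=
            Finset.abs_sum_le_sum_abs _ _
      _ ≤ ∑ x ∈ A m, (1 - l x) * Δ := by
          apply Finset.sum_le_sum
          intro x hx
          obtain ⟨h0, h1⟩ := hboxl x hx
          rw [abs_mul, abs_of_nonneg (by linarith : (0:ℝ) ≤ 1 - l x)]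
          exact mul_le_mul_of_nonneg_left (hvu x j) (by linarith)
      _ = (d:ℝ) * Δ := by
          rw [← Finset.sum_mul]
          have : ∑ x ∈ A m, (1 - l x) = (d:ℝ) := by
            rw [Finset.sum_sub_distrib, Finset.sum_const, hcard m hmL, hsuml, nsmul_eq_mul,
              mul_one]
            ring
          rw [this]
    have hA2 : |((d:ℝ)/L) * b| ≤ (d:ℝ) * Δ := by
      rw [abs_mul, abs_of_nonneg (div_nonneg hd0 hL0R.le)]
      calc (d:ℝ)/L * |b| ≤ (d:ℝ)/L * ((L:ℝ)*Δ) :=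
            mul_le_mul_of_nonneg_left hbabs (div_nonneg hd0 hL0R.le)
      _ = (d:ℝ) * Δ := by field_simp
    calc |(∑ x ∈ A m, (1 - l x) * u x j) - ((d:ℝ)/L) * b|
        ≤ |∑ x ∈ A m, (1 - l x) * u x j| + |((d:ℝ)/L) * b| := abs_sub _ _
    _ ≤ (d:ℝ) * Δ + (d:ℝ) * Δ := add_le_add hA1 hA2
    _ ≤ 4 * (Δ:ℝ) * ((d:ℝ) + 1) := by nlinarith
  · -- trivial case m < d
    have hm0 : (0:ℝ) ≤ m := by positivity
    have hmd : (m:ℝ) ≤ d := by exact_mod_cast hdm.le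
    have hA1 : |∑ x ∈ A m, u x j| ≤ (m:ℝ) * Δ := by
      calc |∑ x ∈ A m, u x j| ≤ ∑ x ∈ A m, |u x j| := Finset.abs_sum_le_sum_abs _ _
      _ ≤ ∑ _x ∈ A m, (Δ:ℝ) := Finset.sum_le_sum (fun x _ => hvu x j)
      _ = (m:ℝ) * Δ := by rw [Finset.sum_const, hcard m hmL, nsmul_eq_mul]
    have hA2 : |((m:ℝ)/L) * b| ≤ (m:ℝ) * Δ := by
      rw [abs_mul, abs_of_nonneg (div_nonneg hm0 hL0R.le)]
      calc (m:ℝ)/L * |b| ≤ (m:ℝ)/L * ((L:ℝ)*Δ) :=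
            mul_le_mul_of_nonneg_left hbabs (div_nonneg hm0 hL0R.le)
      _ = (m:ℝ) * Δ := by field_simp
    calc |(∑ x ∈ A m, u x j) - ((m:ℝ)/L) * b|
        ≤ |∑ x ∈ A m, u x j| + |((m:ℝ)/L) * b| := abs_sub _ _
    _ ≤ (m:ℝ) * Δ + (m:ℝ) * Δ := add_le_add hA1 hA2
    _ ≤ 4 * (Δ:ℝ) * ((d:ℝ) + 1) := by nlinarith
end

section
/- Let d ≥ 1, Δ ≥ 1, ℓ ≥ 2, and set C = (16Δ(d+1) + 1)^{d(ℓ−1)}. Let B^(1), …, B^(ℓ) be nonsingular d×d matrices whose columns lie in ℤ_{≥0}^d and have ∞-norm at most Δ, and let x^(1), …, x^(ℓ) ∈ ℝ_{≥0}^d be nonnegative real vectors with B^(1)x^(1) = B^(2)x^(2) = … = B^(ℓ)x^(ℓ). If ‖x^(i)‖_1 > d·C for every i, then there exist nonzero integer vectors y^(1), …, y^(ℓ) ∈ ℤ_{≥0}^d with y^(i) ≤ x^(i) entrywise and ‖y^(i)‖_1 ≤ d·C for every i, such that B^(1)y^(1) = B^(2)y^(2) = … = B^(ℓ)y^(ℓ).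 -/
set_option maxHeartbeats 1000000 in
/-- if `ℓ` nonsingular matrices with nonnegative integer columns
of infinity norm at most `Δ` admit nonnegative real solutions
`B⁽¹⁾x⁽¹⁾ = … = B⁽ˡ⁾x⁽ˡ⁾` all of 1-norm larger than `d·C` where
`C = (16Δ(d+1)+1)^{d(ℓ−1)}`, then there are nonzero nonnegative integer
vectors `y⁽ⁱ⁾ ≤ x⁽ⁱ⁾` of 1-norm at most `d·C` with
`B⁽¹⁾y⁽¹⁾ = … = B⁽ˡ⁾y⁽ˡ⁾`. -/
theorem common_integer_subsolution
    (d Δ ℓ : ℕ) (hd : 1 ≤ d) (hΔ : 1 ≤ Δ) (hℓ : 2 ≤ ℓ)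
    (C : ℕ) (hC : C = (16 * Δ * (d + 1) + 1) ^ (d * (ℓ - 1)))
    (B : Fin ℓ → Matrix (Fin d) (Fin d) ℤ)
    (hdet : ∀ i, (B i).det ≠ 0)
    (hnn : ∀ i a b, 0 ≤ B i a b)
    (hbd : ∀ i a b, B i a b ≤ (Δ : ℤ))
    (x : Fin ℓ → Fin d → ℝ)
    (hx : ∀ i j, 0 ≤ x i j)
    (heq : ∀ i i' : Fin ℓ,
      ((B i).map (Int.cast : ℤ → ℝ)).mulVec (x i)
        = ((B i').map (Int.cast : ℤ → ℝ)).mulVec (x i'))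
    (hbig : ∀ i, ((d * C : ℕ) : ℝ) < ∑ j, x i j) :
    ∃ y : Fin ℓ → Fin d → ℕ,
      (∀ i, y i ≠ 0) ∧
      (∀ i j, (y i j : ℝ) ≤ x i j) ∧
      (∀ i, ∑ j, y i j ≤ d * C) ∧
      (∀ i i' : Fin ℓ,
        (B i).mulVec (fun j => (y i j : ℤ)) = (B i').mulVec (fun j => (y i' j : ℤ))) := by
  classical
  have hℓ0 : 0 < ℓ := by omega
  set i0 : Fin ℓ := ⟨0, hℓ0⟩ with hi0def
  set emb : Fin (ℓ - 1) → Fin ℓ := (fun k => ⟨k.val + 1, by omega⟩) with hembdef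
  have hcases : ∀ i : Fin ℓ, i = i0 ∨ ∃ k : Fin (ℓ - 1), i = emb k := by
    intro i
    rcases Nat.eq_zero_or_pos i.val with h | h
    · left; exact Fin.ext h
    · right
      refine ⟨⟨i.val - 1, by omega⟩, ?_⟩
      apply Fin.ext
      simp only [hembdef]
      omega
  set e := d * (ℓ - 1) with he
  set Q := 2 * d * Δ - 1 with hQdef
  have hQ1 : 1 ≤ Q := by
    have : 2 ≤ 2 * d * Δ := by nlinarith
    omega
  set K := Q ^ e with hKdef
  have hK1 : 1 ≤ K := Nat.one_le_pow _ _ hQ1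
  have he1 : d ≤ e := by
    have : 1 ≤ ℓ - 1 := by omega
    calc d = d * 1 := (mul_one d).symm
    _ ≤ d * (ℓ - 1) := Nat.mul_le_mul_left d this
  -- the key arithmetic inequality on the constants
  have harith : K * (d + 1) + d ≤ d * C := by
    have h1 : 8 * Q ≤ 16 * Δ * (d + 1) + 1 := by
      have : 8 * Q ≤ 8 * (2 * d * Δ) := by omega
      nlinarith
    have h2 : 8 ^ e * K ≤ C := by
      rw [hC, hKdef, ← mul_pow]
      exact Nat.pow_le_pow_left h1 e
    have h3 : d + 1 ≤ 2 ^ d := Nat.lt_two_pow_self (n := d)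
    have h4 : 4 * (d + 1) ≤ 8 ^ d := by
      calc 4 * (d + 1) ≤ 4 * 2 ^ d := by omega
      _ ≤ 4 ^ d * 2 ^ d := by
          have : (4:ℕ) = 4 ^ 1 := by norm_num
          exact Nat.mul_le_mul_right _ (by
            calc (4:ℕ) = 4 ^ 1 := by norm_num
            _ ≤ 4 ^ d := Nat.pow_le_pow_right (by norm_num) hd)
      _ = 8 ^ d := by rw [← Nat.mul_pow]
    have h5 : 8 ^ d ≤ 8 ^ e := Nat.pow_le_pow_right (by norm_num) he1
    have h6 : 4 * (d + 1) * K ≤ C := le_trans (Nat.mul_le_mul_right K (le_trans h4 h5)) h2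
    nlinarith [hK1, hd]
  -- pick the block with maximal 1-norm
  obtain ⟨i₀, -, hi₀⟩ := Finset.exists_max_image (Finset.univ : Finset (Fin ℓ))
    (fun i => ∑ j, x i j) ⟨⟨0, by omega⟩, Finset.mem_univ _⟩
  have hi₀' : ∀ i, ∑ j, x i j ≤ ∑ j, x i₀ j := fun i => hi₀ i (Finset.mem_univ i)
  set S := ∑ j, x i₀ j with hSdef
  have hdCS : ((d * C : ℕ) : ℝ) < S := hbig i₀
  have hS0 : (0 : ℝ) < S := lt_of_le_of_lt (Nat.cast_nonneg _) hdCS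
  set g : ℝ := (d + 1) / S with hgdef
  have hg0 : 0 < g := by positivity
  set lam : ℕ → ℝ := fun t => t * g with hlamdef
  have hlam_nonneg : ∀ t, 0 ≤ lam t := fun t => by positivity
  have hKd1S : (K * (d + 1) : ℝ) ≤ S := by
    have h : (K * (d + 1) : ℕ) ≤ d * C := le_trans (Nat.le_add_right _ d) harith
    calc (K * (d + 1) : ℝ) = ((K * (d + 1) : ℕ) : ℝ) := by push_cast; ring
    _ ≤ ((d * C : ℕ) : ℝ) := by exact_mod_cast h
    _ ≤ S := le_of_lt hdCS
  have hlamK : ∀ t : ℕ, t ≤ K → lam t ≤ 1 := by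
    intro t ht
    have : (t : ℝ) * g ≤ (K : ℝ) * g :=
      mul_le_mul_of_nonneg_right (by exact_mod_cast ht) (le_of_lt hg0)
    refine le_trans this ?_
    rw [hgdef, mul_div_assoc']
    rw [div_le_one hS0]
    calc (K : ℝ) * (d + 1) = (K * (d+1) : ℝ) := by push_cast; ring
    _ ≤ S := hKd1S
  -- floored points and their images
  set z : ℕ → Fin ℓ → Fin d → ℤ := fun t i j => ⌊lam t * x i j⌋ with hzdef
  have hznn : ∀ t i j, 0 ≤ z t i j := fun t i j =>
    Int.floor_nonneg.mpr (mul_nonneg (hlam_nonneg t) (hx i j))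
  set w : ℕ → Fin ℓ → Fin d → ℤ := fun t i a => ∑ j, B i a j * z t i j with hwdef
  set R : ℕ → Fin ℓ → Fin d → ℝ := fun t i a => ∑ j, (B i a j : ℝ) * (lam t * x i j) with hRdef
  have hwR_le : ∀ t i a, ((w t i a : ℤ) : ℝ) ≤ R t i a := by
    intro t i a
    rw [hwdef, hRdef]
    push_cast
    refine Finset.sum_le_sum fun j _ => ?_
    exact mul_le_mul_of_nonneg_left (Int.floor_le _) (by exact_mod_cast hnn i a j)
  have hRw_lt : ∀ t i a, R t i a < ((w t i a : ℤ) : ℝ) + d * Δ := by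
    intro t i a
    rw [hwdef, hRdef]
    push_cast
    have hlt : ∑ j, ((B i a j : ℝ) * (lam t * x i j) - (B i a j : ℝ) * (⌊lam t * x i j⌋ : ℝ))
        < ∑ _j : Fin d, (Δ : ℝ) := by
      refine Finset.sum_lt_sum_of_nonempty ⟨⟨0, by omega⟩, Finset.mem_univ _⟩ fun j _ => ?_
      have hfr0 : (0:ℝ) ≤ lam t * x i j - (⌊lam t * x i j⌋ : ℝ) := by
        have := Int.floor_le (lam t * x i j); linarith
      have hfr1 : lam t * x i j - (⌊lam t * x i j⌋ : ℝ) < 1 := by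
        have := Int.lt_floor_add_one (lam t * x i j); linarith
      have hB0 : (0:ℝ) ≤ (B i a j : ℝ) := by exact_mod_cast hnn i a j
      have hBΔ : (B i a j : ℝ) ≤ (Δ : ℝ) := by exact_mod_cast hbd i a j
      calc (B i a j : ℝ) * (lam t * x i j) - (B i a j : ℝ) * (⌊lam t * x i j⌋ : ℝ)
          = (B i a j : ℝ) * (lam t * x i j - (⌊lam t * x i j⌋ : ℝ)) := by ring
      _ ≤ (Δ : ℝ) * (lam t * x i j - (⌊lam t * x i j⌋ : ℝ)) :=
          mul_le_mul_of_nonneg_right hBΔ hfr0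
      _ < (Δ : ℝ) * 1 := by
          have hΔ0 : (0:ℝ) < (Δ:ℝ) := by exact_mod_cast hΔ
          exact (mul_lt_mul_iff_right₀ hΔ0).mpr hfr1
      _ ≤ (Δ : ℝ) := by norm_num
    rw [Finset.sum_sub_distrib] at hlt
    simp only [Finset.sum_const, Finset.card_univ, Fintype.card_fin, nsmul_eq_mul] at hlt
    linarith
  have hRR : ∀ t i i' a, R t i a = R t i' a := by
    intro t i i' a
    have h := congrFun (heq i i') a
    have hmv : ∀ i'' : Fin ℓ, ((B i'').map (Int.cast : ℤ → ℝ)).mulVec (x i'') a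
        = ∑ j, (B i'' a j : ℝ) * x i'' j := by
      intro i''
      simp [Matrix.mulVec, dotProduct, Matrix.map_apply]
    have hform : ∀ i'' : Fin ℓ, R t i'' a = lam t * ∑ j, (B i'' a j : ℝ) * x i'' j := by
      intro i''
      rw [hRdef, Finset.mul_sum]
      exact Finset.sum_congr rfl fun j _ => by ring
    rw [hform i, hform i', ← hmv i, ← hmv i', h]
  -- the pigeonhole map
  set F : ℕ → Fin (ℓ - 1) → Fin d → ℤ :=
    fun t k a => w t (emb k) a - w t i0 a with hFdef
  have hFbox : ∀ t k a, F t k a ∈ Finset.Icc (-(d * Δ : ℤ) + 1) ((d * Δ : ℤ) - 1) := by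
    intro t k a
    have h1 : ((F t k a : ℤ) : ℝ) < (d : ℝ) * Δ := by
      have := hwR_le t (emb k) a
      have := hRw_lt t i0 a
      have := hRR t (emb k) i0 a
      rw [hFdef]; push_cast
      linarith
    have h2 : -((d : ℝ) * Δ) < ((F t k a : ℤ) : ℝ) := by
      have := hwR_le t i0 a
      have := hRw_lt t (emb k) a
      have := hRR t (emb k) i0 a
      rw [hFdef]; push_cast
      linarith
    have h1' : F t k a < (d * Δ : ℤ) := by exact_mod_cast h1
    have h2' : -(d * Δ : ℤ) < F t k a := by exact_mod_cast h2
    rw [Finset.mem_Icc]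
    omega
  obtain ⟨u, -, v, -, huv, hFuv⟩ :=
    Finset.exists_ne_map_eq_of_card_lt_of_maps_to (s := (Finset.univ : Finset (Fin (K + 1))))
      (f := fun u : Fin (K + 1) => fun k a => F u.val k a)
      (t := Fintype.piFinset fun _ : Fin (ℓ - 1) =>
        Fintype.piFinset fun _ : Fin d => Finset.Icc (-(d * Δ : ℤ) + 1) ((d * Δ : ℤ) - 1))
      (by
        rw [Finset.card_univ, Fintype.card_fin, Fintype.card_piFinset]
        have hIcc : (Finset.Icc (-(d * Δ : ℤ) + 1) ((d * Δ : ℤ) - 1)).card = Q := by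
          rw [Int.card_Icc]
          have hm : (d : ℤ) * (Δ : ℤ) = ((d * Δ : ℕ) : ℤ) := by push_cast; ring
          rw [hm]
          have h2 : 1 ≤ d * Δ := Nat.one_le_iff_ne_zero.mpr (by positivity)
          have h3 : Q = 2 * (d * Δ) - 1 := by rw [hQdef]; ring_nf
          omega
        calc (∏ _k : Fin (ℓ - 1), (Fintype.piFinset fun _ : Fin d =>
                Finset.Icc (-(d * Δ : ℤ) + 1) ((d * Δ : ℤ) - 1)).card)
            = ∏ _k : Fin (ℓ - 1), ∏ _a : Fin d, Q := by
              refine Finset.prod_congr rfl fun k _ => ?_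
              rw [Fintype.card_piFinset]
              exact Finset.prod_congr rfl fun a _ => hIcc
        _ = (Q ^ d) ^ (ℓ - 1) := by simp [Finset.prod_const]
        _ = Q ^ e := by rw [← pow_mul, he]
        _ < K + 1 := by omega)
      (fun u _ => by
        rw [Finset.mem_coe, Fintype.mem_piFinset]
        intro k
        rw [Fintype.mem_piFinset]
        intro a
        exact hFbox u.val k a)
  -- order the two indices
  obtain ⟨u, v, huv, hFuv⟩ : ∃ u v : Fin (K + 1), u.val < v.val ∧
      (fun k a => F u.val k a) = (fun k a => F v.val k a) := by
    rcases huv.lt_or_gt with h | h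
    · exact ⟨u, v, h, hFuv⟩
    · exact ⟨v, u, h, hFuv.symm⟩
  set s' := u.val with hs'
  set t' := v.val with ht'
  have hFst : ∀ k a, F s' k a = F t' k a := fun k a => by
    have := congrFun (congrFun hFuv k) a
    exact this
  have ht'K : t' ≤ K := by omega
  -- the difference vector
  set Y : Fin ℓ → Fin d → ℤ := fun i j => z t' i j - z s' i j with hYdef
  have hlamst : lam s' ≤ lam t' :=
    mul_le_mul_of_nonneg_right (by exact_mod_cast le_of_lt huv) (le_of_lt hg0)
  have hYnn : ∀ i j, 0 ≤ Y i j := by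
    intro i j
    rw [hYdef]
    have : lam s' * x i j ≤ lam t' * x i j := mul_le_mul_of_nonneg_right hlamst (hx i j)
    simp only [sub_nonneg]
    exact Int.floor_le_floor this
  set y : Fin ℓ → Fin d → ℕ := fun i j => (Y i j).toNat with hydef
  have hyY : ∀ i j, ((y i j : ℕ) : ℤ) = Y i j := fun i j => Int.toNat_of_nonneg (hYnn i j)
  -- the images of all blocks agree
  have hFst' : ∀ k : Fin (ℓ - 1), ∀ a,
      w s' (emb k) a - w s' i0 a = w t' (emb k) a - w t' i0 a := by
    intro k a
    have h := hFst k a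
    rw [hFdef] at h
    simpa using h
  have hweq : ∀ i : Fin ℓ, ∀ a, w t' i a - w s' i a = w t' i0 a - w s' i0 a := by
    intro i a
    rcases hcases i with rfl | ⟨k, rfl⟩
    · rfl
    · have := hFst' k a
      omega
  have hBY : ∀ i : Fin ℓ, ∀ a, ∑ j, B i a j * Y i j = ∑ j, B i0 a j * Y i0 j := by
    intro i a
    have h := hweq i a
    rw [hwdef] at h
    simp only at h
    have expand : ∀ i'' : Fin ℓ, ∑ j, B i'' a j * Y i'' j
        = (∑ j, B i'' a j * z t' i'' j) - ∑ j, B i'' a j * z s' i'' j := by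
      intro i''
      rw [← Finset.sum_sub_distrib]
      exact Finset.sum_congr rfl fun j _ => by rw [hYdef]; ring
    rw [expand, expand, h]
  -- quantitative bounds
  set Γ : ℝ := ((t' : ℝ) - (s' : ℝ)) * g with hΓdef
  have hΓ_eq : lam t' - lam s' = Γ := by rw [hlamdef, hΓdef]; ring
  have hΓ_ge : g ≤ Γ := by
    rw [hΓdef]
    have h1 : (1 : ℝ) ≤ (t' : ℝ) - (s' : ℝ) := by
      have : (s' : ℝ) + 1 ≤ (t' : ℝ) := by exact_mod_cast huv
      linarith
    nlinarith
  have hΓ_le : Γ ≤ (K : ℝ) * g := by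
    rw [hΓdef]
    have h1 : (t' : ℝ) - (s' : ℝ) ≤ (K : ℝ) := by
      have : (t' : ℝ) ≤ (K : ℝ) := by exact_mod_cast ht'K
      have : (0 : ℝ) ≤ (s' : ℝ) := by positivity
      linarith [show (t' : ℝ) ≤ (K : ℝ) from by exact_mod_cast ht'K]
    exact mul_le_mul_of_nonneg_right h1 (le_of_lt hg0)
  have hgS : g * S = (d : ℝ) + 1 := by
    rw [hgdef]
    field_simp
  -- upper bound on block sums
  have hupper : ∀ i, ∑ j, ((Y i j : ℤ) : ℝ) ≤ Γ * (∑ j, x i j) + d := by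
    intro i
    have hterm : ∀ j, ((Y i j : ℤ) : ℝ) ≤ (lam t' * x i j - lam s' * x i j) + 1 := by
      intro j
      rw [hYdef]
      push_cast
      have h1 : ((z t' i j : ℤ) : ℝ) ≤ lam t' * x i j := Int.floor_le _
      have h2 : lam s' * x i j - 1 < ((z s' i j : ℤ) : ℝ) := Int.sub_one_lt_floor _
      rw [hzdef] at h1 h2 ⊢
      push_cast at h1 h2 ⊢
      linarith
    calc ∑ j, ((Y i j : ℤ) : ℝ) ≤ ∑ j, ((lam t' * x i j - lam s' * x i j) + 1) :=
        Finset.sum_le_sum fun j _ => hterm j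
    _ = (lam t' - lam s') * (∑ j, x i j) + d := by
        rw [Finset.sum_add_distrib]
        simp only [Finset.sum_const, Finset.card_univ, Fintype.card_fin, nsmul_eq_mul, mul_one]
        rw [Finset.mul_sum]
        congr 1
        exact Finset.sum_congr rfl fun j _ => by ring
    _ = Γ * (∑ j, x i j) + d := by rw [hΓ_eq]
  have hsum_le : ∀ i, ∑ j, ((Y i j : ℤ) : ℝ) ≤ (K : ℝ) * ((d : ℝ) + 1) + d := by
    intro i
    refine le_trans (hupper i) ?_
    have hxs : (0:ℝ) ≤ ∑ j, x i j := Finset.sum_nonneg fun j _ => hx i j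
    have h1 : Γ * (∑ j, x i j) ≤ ((K : ℝ) * g) * S := by
      have hΓ0 : (0:ℝ) ≤ Γ := le_trans (le_of_lt hg0) hΓ_ge
      calc Γ * (∑ j, x i j) ≤ Γ * S := mul_le_mul_of_nonneg_left (hi₀' i) hΓ0
      _ ≤ ((K : ℝ) * g) * S := mul_le_mul_of_nonneg_right hΓ_le (le_of_lt hS0)
    have h2 : ((K : ℝ) * g) * S = (K : ℝ) * ((d : ℝ) + 1) := by
      rw [mul_assoc, hgS]
    linarith
  -- lower bound at the maximal block
  have hlower : (1 : ℝ) ≤ ∑ j, ((Y i₀ j : ℤ) : ℝ) := by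
    have hterm : ∀ j, (lam t' * x i₀ j - lam s' * x i₀ j) - 1 ≤ ((Y i₀ j : ℤ) : ℝ) := by
      intro j
      rw [hYdef]
      have h1 : lam t' * x i₀ j - 1 < ((z t' i₀ j : ℤ) : ℝ) := Int.sub_one_lt_floor _
      have h2 : ((z s' i₀ j : ℤ) : ℝ) ≤ lam s' * x i₀ j := Int.floor_le _
      rw [hzdef] at h1 h2
      push_cast at h1 h2 ⊢
      linarith
    have hsum : ∑ j, ((lam t' * x i₀ j - lam s' * x i₀ j) - 1) = Γ * S - d := by
      rw [Finset.sum_sub_distrib]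
      simp only [Finset.sum_const, Finset.card_univ, Fintype.card_fin, nsmul_eq_mul, mul_one]
      rw [hSdef, Finset.mul_sum, ← hΓ_eq]
      congr 1
      exact Finset.sum_congr rfl fun j _ => by ring
    have h1 : g * S - d ≤ Γ * S - d := by
      have := mul_le_mul_of_nonneg_right hΓ_ge (le_of_lt hS0)
      linarith
    have h2 : g * S - d = 1 := by rw [hgS]; ring
    calc (1:ℝ) = g * S - d := h2.symm
    _ ≤ Γ * S - d := h1
    _ = ∑ j, ((lam t' * x i₀ j - lam s' * x i₀ j) - 1) := hsum.symm
    _ ≤ ∑ j, ((Y i₀ j : ℤ) : ℝ) := Finset.sum_le_sum fun j _ => hterm j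
  -- block i₀ is nonzero
  have hy_i₀ : y i₀ ≠ 0 := by
    intro h0
    have : ∀ j, Y i₀ j = 0 := by
      intro j
      have := congrFun h0 j
      simp only [hydef, Pi.zero_apply] at this
      have h1 := hyY i₀ j
      rw [hydef] at h1
      omega
    have : ∑ j, ((Y i₀ j : ℤ) : ℝ) = 0 := by
      refine Finset.sum_eq_zero fun j _ => ?_
      rw [this j]; norm_num
    linarith [hlower]
  -- equality of matrix images in the conclusion form
  have hmul_eq : ∀ i i' : Fin ℓ,
      (B i).mulVec (fun j => (y i j : ℤ)) = (B i').mulVec (fun j => (y i' j : ℤ)) := by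
    intro i i'
    funext a
    have hform : ∀ i'' : Fin ℓ, (B i'').mulVec (fun j => (y i'' j : ℤ)) a = ∑ j, B i'' a j * Y i'' j := by
      intro i''
      simp only [Matrix.mulVec, dotProduct]
      exact Finset.sum_congr rfl fun j _ => by rw [hyY]
    rw [hform, hform, hBY i a, hBY i' a]
  -- all blocks nonzero
  have hy_ne : ∀ i, y i ≠ 0 := by
    intro i h0
    have hzero : (B i).mulVec (fun j => (y i j : ℤ)) = 0 := by
      funext a
      simp only [Matrix.mulVec, dotProduct]
      rw [Pi.zero_apply]
      refine Finset.sum_eq_zero fun j _ => ?_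
      have : y i j = 0 := congrFun h0 j
      rw [this]
      simp
    have h1 : (B i₀).mulVec (fun j => (y i₀ j : ℤ)) = 0 := by
      rw [hmul_eq i₀ i, hzero]
    have h2 : ¬(∃ v, v ≠ 0 ∧ (B i₀).mulVec v = 0) := by
      rw [Matrix.exists_mulVec_eq_zero_iff]
      exact hdet i₀
    apply h2
    refine ⟨fun j => (y i₀ j : ℤ), ?_, h1⟩
    intro hv
    apply hy_i₀
    funext j
    have := congrFun hv j
    simp only [Pi.zero_apply] at this
    exact_mod_cast this
  -- final sum bound in ℕ
  have hsum_nat : ∀ i, ∑ j, y i j ≤ d * C := by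
    intro i
    have hr : ((∑ j, y i j : ℕ) : ℝ) ≤ ((d * C : ℕ) : ℝ) := by
      have hcast : ((∑ j, y i j : ℕ) : ℝ) = ∑ j, ((Y i j : ℤ) : ℝ) := by
        push_cast
        refine Finset.sum_congr rfl fun j _ => ?_
        have := hyY i j
        exact_mod_cast congrArg (fun z : ℤ => (z : ℝ)) this
      rw [hcast]
      refine le_trans (hsum_le i) ?_
      have : (K * (d + 1) + d : ℕ) ≤ (d * C : ℕ) := harith
      calc (K : ℝ) * ((d : ℝ) + 1) + d = ((K * (d + 1) + d : ℕ) : ℝ) := by push_cast; ring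
      _ ≤ ((d * C : ℕ) : ℝ) := by exact_mod_cast this
    exact_mod_cast hr
  -- y ≤ x
  have hyx : ∀ i j, ((y i j : ℕ) : ℝ) ≤ x i j := by
    intro i j
    have hYr : ((y i j : ℕ) : ℝ) = ((Y i j : ℤ) : ℝ) := by
      exact_mod_cast congrArg (fun z : ℤ => (z : ℝ)) (hyY i j)
    rw [hYr, hYdef]
    push_cast
    have h1 : ((z t' i j : ℤ) : ℝ) ≤ lam t' * x i j := Int.floor_le _
    have h2 : (0 : ℝ) ≤ ((z s' i j : ℤ) : ℝ) := by exact_mod_cast hznn s' i j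
    have h3 : lam t' * x i j ≤ 1 * x i j :=
      mul_le_mul_of_nonneg_right (hlamK t' ht'K) (hx i j)
    rw [hzdef] at h1 h2
    push_cast at h1 h2
    linarith
  exact ⟨y, hy_ne, hyx, hsum_nat, hmul_eq⟩
end

section
/- Let P ⊂ ℤ^d be a finite set of vectors, let b ∈ ℤ^d, and let x^(1), …, x^(ℓ) be the (finitely many) vertices (extreme points) of the polyhedron Q = { x ∈ ℝ^P : x ≥ 0, Σ_{p∈P} x_p · p = b }. Then for every λ ∈ ℤ_{≥0}^P with Σ_{p∈P} λ_p · p = b there exists an index j ∈ {1, …, ℓ} such that (1/ℓ)·x^(j) ≤ λ entrywise, i.e. (1/ℓ)·x^(j)_p ≤ λ_p for every p ∈ P. -/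
open Finset
variable {ι : Type*} [Fintype ι] {d' : ℕ}

open Finset



def QSet (c : ι → Fin d' → ℝ) (br : Fin d' → ℝ) : Set (ι → ℝ) :=
  {x | (∀ p, 0 ≤ x p) ∧ ∀ j, ∑ p, x p * c p j = br j}

lemma aux_extreme (c : ι → Fin d' → ℝ) (br : Fin d' → ℝ) (y : ι → ℝ) (hy : y ∈ QSet c br)
    (h : ∀ w : ι → ℝ, (∀ p, y p = 0 → w p = 0) → (∀ j, ∑ p, w p * c p j = 0) → w = 0) :
    y ∈ Set.extremePoints ℝ (QSet c br) := by
  refine ⟨hy, ?_⟩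
  intro y1 h1 y2 h2 hseg
  obtain ⟨a, b, ha, hb, hab, hy'⟩ := hseg
  have h12 : y1 = y2 := by
    have hz := h (y1 - y2) ?_ ?_
    · funext p
      have := congrFun hz p
      simp only [Pi.sub_apply, Pi.zero_apply] at this
      linarith
    · intro p hp
      have e : a * y1 p + b * y2 p = 0 := by
        have := congrFun hy' p
        simpa [hp] using this
      have h1p : 0 ≤ y1 p := h1.1 p
      have h2p : 0 ≤ y2 p := h2.1 p
      have e1 : y1 p = 0 := by nlinarith
      have e2 : y2 p = 0 := by nlinarith
      simp [e1, e2]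
    · intro j
      simp only [Pi.sub_apply, sub_mul]
      rw [Finset.sum_sub_distrib, h1.2 j, h2.2 j, sub_self]
  have hyy2 : y = y2 := by
    rw [← hy', h12, ← add_smul, hab, one_smul]
  exact h12.trans hyy2.symm

lemma aux_move (c : ι → Fin d' → ℝ) (br : Fin d' → ℝ) (y : ι → ℝ) (hy : y ∈ QSet c br)
    (w : ι → ℝ) (hw0 : ∀ p, y p = 0 → w p = 0) (hwA : ∀ j, ∑ p, w p * c p j = 0)
    (p0 : ι) (hp0 : 0 < w p0) :
    ∃ t : ℝ, 0 < t ∧ (y - t • w) ∈ QSet c br ∧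
      (univ.filter fun p => (y - t • w) p ≠ 0).card < (univ.filter fun p => y p ≠ 0).card := by
  classical
  set S : Finset ι := univ.filter fun p => 0 < w p with hS
  have hSne : S.Nonempty := ⟨p0, by simp [hS, hp0]⟩
  obtain ⟨q, hqS, hqmin⟩ := Finset.exists_min_image S (fun p => y p / w p) hSne
  have hwq : 0 < w q := by simpa [hS] using hqS
  set t := y q / w q with ht
  have hyq : 0 < y q := by
    rcases lt_or_eq_of_le (hy.1 q) with h | h
    · exact h
    · exact absurd (hw0 q h.symm) (ne_of_gt hwq)
  have htpos : 0 < t := div_pos hyq hwq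
  refine ⟨t, htpos, ⟨?_, ?_⟩, ?_⟩
  · intro p
    simp only [Pi.sub_apply, Pi.smul_apply, smul_eq_mul]
    by_cases hwp : 0 < w p
    · have hle : t ≤ y p / w p := hqmin p (by simp [hS, hwp])
      have : t * w p ≤ y p := (le_div_iff₀ hwp).mp hle
      linarith
    · push_neg at hwp
      nlinarith [hy.1 p]
  · intro j
    simp only [Pi.sub_apply, Pi.smul_apply, smul_eq_mul, sub_mul]
    rw [Finset.sum_sub_distrib, hy.2 j]
    have : ∑ p, t * w p * c p j = t * ∑ p, w p * c p j := by
      rw [Finset.mul_sum]; congr 1; funext p; ring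
    rw [this, hwA j, mul_zero, sub_zero]
  · have hsub : (univ.filter fun p => (y - t • w) p ≠ 0) ⊆ (univ.filter fun p => y p ≠ 0) := by
      intro p hp
      simp only [mem_filter, mem_univ, true_and] at hp ⊢
      intro h0
      exact hp (by simp [Pi.sub_apply, h0, hw0 p h0])
    have hq0 : (y - t • w) q = 0 := by
      simp [Pi.sub_apply, ht, div_mul_cancel₀ _ (ne_of_gt hwq)]
    refine Finset.card_lt_card ⟨hsub, fun hcon => ?_⟩
    have hqmem : q ∈ univ.filter fun p => y p ≠ 0 := by simp [ne_of_gt hyq]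
    have := hcon hqmem
    simp only [mem_filter, mem_univ, true_and] at this
    exact this hq0

lemma aux_key (c : ι → Fin d' → ℝ) (br : Fin d' → ℝ) :
    ∀ n (y : ι → ℝ), y ∈ QSet c br → (univ.filter fun p => y p ≠ 0).card ≤ n →
    ∃ z ∈ convexHull ℝ (Set.extremePoints ℝ (QSet c br)), ∀ p, z p ≤ y p := by
  classical
  intro n
  induction n with
  | zero =>
      intro y hy hcard
      refine ⟨y, subset_convexHull ℝ _ (aux_extreme c br y hy ?_), fun p => le_refl _⟩
      intro w hw0 _
      funext p
      have hyp : y p = 0 := by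
        by_contra h
        have hmem : p ∈ univ.filter fun p => y p ≠ 0 := by simp [h]
        have := card_pos.mpr ⟨p, hmem⟩
        omega
      simp [hw0 p hyp]
  | succ n IH =>
      intro y hy hcard
      by_cases hdep : ∃ w : ι → ℝ, (∀ p, y p = 0 → w p = 0) ∧ (∀ j, ∑ p, w p * c p j = 0) ∧ w ≠ 0
      · obtain ⟨w, hw0, hwA, hwne⟩ := hdep
        obtain ⟨ps, hps⟩ : ∃ p, w p ≠ 0 := by
          by_contra h; push_neg at h; exact hwne (funext h)
        have hwA' : ∀ j, ∑ p, (-w) p * c p j = 0 := by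
          intro j
          simp only [Pi.neg_apply, neg_mul]
          rw [Finset.sum_neg_distrib, hwA j, neg_zero]
        have hw0' : ∀ p, y p = 0 → (-w) p = 0 := fun p hp => by simp [hw0 p hp]
        by_cases hpos : ∃ p, 0 < w p
        · obtain ⟨p2, hp2⟩ := hpos
          obtain ⟨t2, ht2, hy2Q, hy2c⟩ := aux_move c br y hy w hw0 hwA p2 hp2
          obtain ⟨z2, hz2mem, hz2le⟩ := IH (y - t2 • w) hy2Q (by omega)
          by_cases hneg : ∃ p, 0 < (-w) p
          · obtain ⟨p1, hp1⟩ := hneg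
            obtain ⟨t1, ht1, hy1Q, hy1c⟩ := aux_move c br y hy (-w) hw0' hwA' p1 hp1
            obtain ⟨z1, hz1mem, hz1le⟩ := IH (y - t1 • (-w)) hy1Q (by omega)
            have hts : (0:ℝ) < t1 + t2 := by linarith
            set a := t2 / (t1 + t2) with haa
            set b := t1 / (t1 + t2) with hbb
            have ha : 0 ≤ a := le_of_lt (div_pos ht2 hts)
            have hb : 0 ≤ b := le_of_lt (div_pos ht1 hts)
            have hab : a + b = 1 := by
              rw [haa, hbb]; field_simp; ring
            have hkey : a * t1 = b * t2 := by
              rw [haa, hbb]; field_simp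
            refine ⟨a • z1 + b • z2, (convex_convexHull ℝ _) hz1mem hz2mem ha hb hab, ?_⟩
            intro p
            have h1 := hz1le p
            have h2 := hz2le p
            have e1 : (y - t1 • (-w)) p = y p + t1 * w p := by
              simp [Pi.sub_apply]
            have e2 : (y - t2 • w) p = y p - t2 * w p := by
              simp [Pi.sub_apply]
            rw [e1] at h1; rw [e2] at h2
            have : a * z1 p + b * z2 p ≤ a * (y p + t1 * w p) + b * (y p - t2 * w p) := by
              have := mul_le_mul_of_nonneg_left h1 ha
              have := mul_le_mul_of_nonneg_left h2 hb
              linarith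
            have heq : a * (y p + t1 * w p) + b * (y p - t2 * w p) = y p := by
              linear_combination y p * hab + w p * hkey
            simp only [Pi.add_apply, Pi.smul_apply, smul_eq_mul]
            linarith
          · -- w ≥ 0
            push_neg at hneg
            refine ⟨z2, hz2mem, fun p => ?_⟩
            have hwp : 0 ≤ w p := by have := hneg p; simp only [Pi.neg_apply] at this; linarith
            have := hz2le p
            have e2 : (y - t2 • w) p = y p - t2 * w p := by simp [Pi.sub_apply]
            rw [e2] at this
            nlinarith
        · -- w ≤ 0
          push_neg at hpos
          have hp1 : 0 < (-w) ps := by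
            simp only [Pi.neg_apply]
            rcases lt_or_eq_of_le (hpos ps) with h | h
            · linarith
            · exact absurd h hps
          obtain ⟨t1, ht1, hy1Q, hy1c⟩ := aux_move c br y hy (-w) hw0' hwA' ps hp1
          obtain ⟨z1, hz1mem, hz1le⟩ := IH (y - t1 • (-w)) hy1Q (by omega)
          refine ⟨z1, hz1mem, fun p => ?_⟩
          have := hz1le p
          have e1 : (y - t1 • (-w)) p = y p + t1 * w p := by simp [Pi.sub_apply]
          rw [e1] at this
          nlinarith [hpos p]
      · push_neg at hdep
        exact ⟨y, subset_convexHull ℝ _ (aux_extreme c br y hy hdep), fun p => le_refl _⟩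

/-- for every nonnegative integer solution `λ` of
`Σ_{p∈P} λ_p·p = b`, some vertex (extreme point) `x⁽ʲ⁾` of the polyhedron
`Q = {x ∈ ℝ^P : x ≥ 0, Σ_{p∈P} x_p·p = b}` satisfies `(1/ℓ)·x⁽ʲ⁾ ≤ λ`
entrywise, where `x⁽¹⁾, …, x⁽ˡ⁾` enumerate the extreme points of `Q`. -/
theorem vertex_below_integer_point
    (d : ℕ) (P : Finset (Fin d → ℤ)) (b : Fin d → ℤ) (ℓ : ℕ)
    (Q : Set (↥P → ℝ))
    (hQ : Q = {x : ↥P → ℝ | (∀ p, 0 ≤ x p) ∧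
      ∀ j : Fin d, ∑ p : ↥P, x p * (((p : Fin d → ℤ) j : ℤ) : ℝ) = ((b j : ℤ) : ℝ)})
    (xs : Fin ℓ → (↥P → ℝ))
    (hxs : Set.range xs = Set.extremePoints ℝ Q)
    (lam : ↥P → ℕ)
    (hlam : ∀ j : Fin d, ∑ p : ↥P, (lam p : ℤ) * (p : Fin d → ℤ) j = b j) :
    ∃ i : Fin ℓ, ∀ p : ↥P, (1 / (ℓ : ℝ)) * xs i p ≤ (lam p : ℝ) := by
  classical
  set c : ↥P → Fin d → ℝ := fun p j => (((p : Fin d → ℤ) j : ℤ) : ℝ) with hc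
  set br : Fin d → ℝ := fun j => ((b j : ℤ) : ℝ) with hbr
  have hQ' : Q = QSet c br := hQ
  set lr : ↥P → ℝ := fun p => (lam p : ℝ) with hlr
  have hlrQ : lr ∈ QSet c br := by
    constructor
    · intro p; exact Nat.cast_nonneg _
    · intro j
      show ∑ p, lr p * c p j = br j
      simp only [hlr, hc, hbr]
      exact_mod_cast hlam j
  obtain ⟨z, hzmem, hzle⟩ := aux_key c br (univ.filter fun p => lr p ≠ 0).card lr hlrQ le_rfl
  rw [← hQ', ← hxs] at hzmem
  -- ℓ > 0
  have hℓ : 0 < ℓ := by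
    rcases Nat.eq_zero_or_pos ℓ with h | h
    · subst h
      rw [Set.range_eq_empty, convexHull_empty] at hzmem
      exact absurd hzmem (Set.notMem_empty z)
    · exact h
  -- extract convex combination
  rw [_root_.convexHull_eq] at hzmem
  obtain ⟨κ, t, wt, zf, hw0, hw1, hzs, hcm⟩ := hzmem
  have hcm' : ∑ i ∈ t, wt i • zf i = z := by
    rw [← hcm, Finset.centerMass_eq_of_sum_1 _ _ hw1]
  set g : κ → Fin ℓ := fun i => if h : ∃ j, xs j = zf i then h.choose else ⟨0, hℓ⟩ with hg
  have hgs : ∀ i ∈ t, xs (g i) = zf i := by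
    intro i hi
    have : zf i ∈ Set.range xs := hzs i hi
    obtain ⟨j, hj⟩ := this
    rw [hg]
    simp only
    rw [dif_pos ⟨j, hj⟩]
    exact (⟨j, hj⟩ : ∃ j, xs j = zf i).choose_spec
  set μ : Fin ℓ → ℝ := fun j => ∑ i ∈ t.filter fun i => g i = j, wt i with hμ
  have hμ0 : ∀ j, 0 ≤ μ j := by
    intro j
    apply Finset.sum_nonneg
    intro i hi
    exact hw0 i (Finset.mem_filter.mp hi).1
  have hμ1 : ∑ j, μ j = 1 := by
    rw [hμ, Finset.sum_fiberwise, hw1]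
  -- xs j coordinates nonneg
  have hxsQ : ∀ j : Fin ℓ, xs j ∈ Q := by
    intro j
    have : xs j ∈ Set.range xs := ⟨j, rfl⟩
    rw [hxs] at this
    exact extremePoints_subset this
  have hxs0 : ∀ (j : Fin ℓ) (p : ↥P), 0 ≤ xs j p := by
    intro j p
    have := hxsQ j
    rw [hQ'] at this
    exact this.1 p
  -- z coordinates
  have hzcoord : ∀ p : ↥P, ∑ j, μ j * xs j p = z p := by
    intro p
    have : ∑ j : Fin ℓ, μ j * xs j p = ∑ i ∈ t, wt i * zf i p := by
      rw [hμ]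
      rw [← Finset.sum_fiberwise t g (fun i => wt i * zf i p)]
      congr 1
      funext j
      rw [Finset.sum_mul]
      apply Finset.sum_congr rfl
      intro i hi
      obtain ⟨hit, hgi⟩ := Finset.mem_filter.mp hi
      rw [← hgs i hit, hgi]
    rw [this, ← hcm']
    simp [Finset.sum_apply]
  -- find heavy vertex
  obtain ⟨j0, hj0⟩ : ∃ j0 : Fin ℓ, 1 / (ℓ : ℝ) ≤ μ j0 := by
    by_contra h
    push_neg at h
    have hlt : ∑ j : Fin ℓ, μ j < ∑ j : Fin ℓ, 1 / (ℓ : ℝ) := by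
      apply Finset.sum_lt_sum_of_nonempty
      · exact Finset.univ_nonempty_iff.mpr (Fin.pos_iff_nonempty.mp hℓ)
      · intro j _; exact h j
    rw [hμ1] at hlt
    rw [Finset.sum_const, Finset.card_univ, Fintype.card_fin, nsmul_eq_mul] at hlt
    rw [mul_one_div, div_self (by positivity : (ℓ:ℝ) ≠ 0)] at hlt
    exact lt_irrefl _ hlt
  refine ⟨j0, fun p => ?_⟩
  have h1 : μ j0 * xs j0 p ≤ ∑ j, μ j * xs j p := by
    apply Finset.single_le_sum (f := fun j => μ j * xs j p)
    · intro j _; exact mul_nonneg (hμ0 j) (hxs0 j p)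
    · exact Finset.mem_univ j0
  have h2 : (1 / (ℓ : ℝ)) * xs j0 p ≤ μ j0 * xs j0 p :=
    mul_le_mul_of_nonneg_right hj0 (hxs0 j0 p)
  have h3 := hzcoord p
  have h4 := hzle p
  calc (1 / (ℓ : ℝ)) * xs j0 p ≤ μ j0 * xs j0 p := h2
    _ ≤ ∑ j, μ j * xs j p := h1
    _ = z p := h3
    _ ≤ lr p := h4
end

section
/- Let Δ ≥ 1 and let T_1, …, T_n be nonempty finite multisets of integers from {1, …, Δ} such that all multisets have the same total sum: Σ_{t∈T_1} t = … = Σ_{t∈T_n} t. Then there exist nonempty submultisets S_1 ⊆ T_1, …, S_n ⊆ T_n with |S_i| ≤ Δ²·Δ! for every i such that Σ_{s∈S_1} s = Σ_{s∈S_2} s = … = Σ_{s∈S_n} s. -/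
/-!
If the common sum is at least `Δ · Δ!`, pigeonholing over the `Δ` possible values shows that
every `T i` contains some value `v` with `v · mult(v) ≥ Δ!`; since `v ∣ Δ!`, the submultiset of
`Δ! / v` copies of `v` has sum exactly `Δ!` in every `T i`. Otherwise the common sum is below
`Δ · Δ!`, and as all elements are positive each `T i` itself has fewer than `Δ · Δ!` elements.
-/

namespace Multiset

theorem exists_le_mul_count_of_mul_le_sum {s : Multiset ℕ} {Δ m : ℕ} (hs : s ≠ 0)
    (hmem : ∀ v ∈ s, 1 ≤ v ∧ v ≤ Δ) (h : Δ * m ≤ s.sum) : ∃ v ∈ s, m ≤ v * s.count v := by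
  by_contra! hlt
  have hsupp : s.toFinset ⊆ Finset.Icc 1 Δ := fun v hv =>
    Finset.mem_Icc.2 (hmem v (mem_toFinset.1 hv))
  have : s.sum < Δ * m :=
    calc s.sum = ∑ v ∈ s.toFinset, v * s.count v := by
          rw [Finset.sum_multiset_count]
          exact Finset.sum_congr rfl fun v _ => by rw [smul_eq_mul, mul_comm]
      _ < ∑ _v ∈ s.toFinset, m :=
          Finset.sum_lt_sum_of_nonempty (toFinset_nonempty.2 hs)
            fun v hv => hlt v (mem_toFinset.1 hv)
      _ = s.toFinset.card * m := by rw [Finset.sum_const, smul_eq_mul]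
      _ ≤ Δ * m := by
          gcongr
          simpa using Finset.card_le_card hsupp
  omega

theorem sum_replicate_div_self {k v : ℕ} (h : v ∣ k) : (replicate (k / v) v).sum = k := by
  rw [sum_replicate, smul_eq_mul, Nat.div_mul_cancel h]

theorem exists_le_sum_eq_factorial_of_mul_factorial_le_sum {s : Multiset ℕ} {Δ : ℕ} (hs : s ≠ 0)
    (hmem : ∀ v ∈ s, 1 ≤ v ∧ v ≤ Δ) (h : Δ * Δ.factorial ≤ s.sum) :
    ∃ S ≤ s, S ≠ 0 ∧ S.card ≤ Δ.factorial ∧ S.sum = Δ.factorial := by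
  obtain ⟨v, hv, hcount⟩ := exists_le_mul_count_of_mul_le_sum hs hmem h
  obtain ⟨hv_pos, hvΔ⟩ := hmem v hv
  have hdvd : v ∣ Δ.factorial := Nat.dvd_factorial hv_pos hvΔ
  refine ⟨replicate (Δ.factorial / v) v, le_count_iff_replicate_le.1 (Nat.div_le_of_le_mul hcount),
    ?_, by simpa using Nat.div_le_self _ _, sum_replicate_div_self hdvd⟩
  have : 0 < Δ.factorial / v := Nat.div_pos (Nat.le_of_dvd Δ.factorial_pos hdvd) hv_pos
  simpa [← card_pos] using this

end Multiset

/-- one-dimensional subrepresentation lemma.  Nonempty multisets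
of integers from `{1, …, Δ}` with equal total sums admit nonempty submultisets
of cardinality at most `Δ²·Δ!` with equal sums. -/
theorem subrepresentation_dim_one
    (Δ : ℕ) (hΔ : 1 ≤ Δ) (n : ℕ) (T : Fin n → Multiset ℕ)
    (hne : ∀ i, T i ≠ 0)
    (hmem : ∀ i, ∀ t ∈ T i, 1 ≤ t ∧ t ≤ Δ)
    (hsum : ∀ i i', (T i).sum = (T i').sum) :
    ∃ S : Fin n → Multiset ℕ,
      (∀ i, S i ≠ 0) ∧
      (∀ i, S i ≤ T i) ∧
      (∀ i, (S i).card ≤ Δ ^ 2 * Nat.factorial Δ) ∧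
      (∀ i i', (S i).sum = (S i').sum) := by
  by_cases hbig : ∀ i, Δ * Δ.factorial ≤ (T i).sum
  · choose S hle hS_ne hcard hS_sum using fun i =>
      Multiset.exists_le_sum_eq_factorial_of_mul_factorial_le_sum (hne i) (hmem i) (hbig i)
    refine ⟨S, hS_ne, hle, fun i => (hcard i).trans ?_, fun i i' => by rw [hS_sum, hS_sum]⟩
    exact Nat.le_mul_of_pos_left _ (by positivity)
  · obtain ⟨i₀, hi₀⟩ := not_forall.1 hbig
    refine ⟨T, hne, fun _ => le_rfl, fun i => ?_, hsum⟩
    have hcard : (T i).card ≤ (T i).sum := by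
      simpa using Multiset.card_nsmul_le_sum fun t ht => (hmem i t ht).1
    have hbound : Δ * Δ.factorial ≤ Δ ^ 2 * Δ.factorial := by
      gcongr; exact Nat.le_self_pow two_ne_zero Δ
    have := hsum i i₀
    omega
end

section
/- Let Δ ≥ 2 and let 𝒜 ∈ ℤ^{(Δ−1)×Δ} be the matrix whose i-th row (for i = 1, …, Δ−1) has entry −1 in column 1, entry i+1 in column i+1, and zeros elsewhere. Then every x ∈ ℤ^Δ with 𝒜x = 0 satisfies k ∣ x_1 for every k ∈ {2, …, Δ}, hence lcm(2, …, Δ) ∣ x_1. Consequently every nonzero x ∈ ℤ^Δ with 𝒜x = 0 satisfies ‖x‖_∞ ≥ |x_1| ≥ lcm(2, …, Δ); in particular every Graver element of 𝒜 has ∞-norm at least lcm(2, …, Δ). -/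
/-- The matrix of the first lower-bound construction: row `i`
(for `i = 0, …, Δ-2`, i.e. `i = 1, …, Δ-1` one-based) has entry `-1` in
column `0` and entry `i+2` in column `i+1`, and zeros elsewhere. -/
def lowerBdMatrix (Δ : ℕ) : Matrix (Fin (Δ - 1)) (Fin Δ) ℤ :=
  fun i j =>
    if (j : ℕ) = 0 then -1
    else if (j : ℕ) = (i : ℕ) + 1 then ((i : ℕ) + 2 : ℤ)
    else 0

lemma lowerBd_row_eq (Δ : ℕ) (hΔ : 2 ≤ Δ) (x : Fin Δ → ℤ) (i : Fin (Δ - 1)) :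
    (lowerBdMatrix Δ).mulVec x i
      = -(x ⟨0, Nat.zero_lt_of_lt hΔ⟩) + ((i : ℕ) + 2) * x ⟨(i : ℕ) + 1, by omega⟩ := by
  have hi := i.isLt
  have h1 : (i : ℕ) + 1 < Δ := by omega
  set j0 : Fin Δ := ⟨0, by omega⟩
  set j1 : Fin Δ := ⟨(i : ℕ) + 1, h1⟩
  have hne : j0 ≠ j1 := by simp [j0, j1, Fin.ext_iff]
  have : (lowerBdMatrix Δ).mulVec x i
      = ∑ j ∈ ({j0, j1} : Finset (Fin Δ)), lowerBdMatrix Δ i j * x j := by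
    rw [Matrix.mulVec, dotProduct]
    refine (Finset.sum_subset (Finset.subset_univ _) ?_).symm
    intro j _ hj
    simp only [Finset.mem_insert, Finset.mem_singleton] at hj
    push_neg at hj
    have hj0 : (j : ℕ) ≠ 0 := fun h => hj.1 (Fin.ext h)
    have hj1 : (j : ℕ) ≠ (i : ℕ) + 1 := fun h => hj.2 (Fin.ext h)
    simp [lowerBdMatrix, hj0, hj1]
  rw [this, Finset.sum_pair hne]
  simp [lowerBdMatrix, j0, j1]

/-- every kernel element `x` of the matrix above has `x₁`
divisible by each `k ∈ {2, …, Δ}`, hence by `lcm(2, …, Δ)`; consequently every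
nonzero kernel element, in particular every Graver element, has infinity norm
at least `lcm(2, …, Δ)`. -/
theorem lowerBd_matrix_kernel (Δ : ℕ) (hΔ : 2 ≤ Δ) :
    (∀ x : Fin Δ → ℤ, (lowerBdMatrix Δ).mulVec x = 0 →
      (∀ k : ℕ, 2 ≤ k → k ≤ Δ → (k : ℤ) ∣ x ⟨0, by omega⟩) ∧
      (((Finset.lcm (Finset.Icc 2 Δ) id : ℕ) : ℤ) ∣ x ⟨0, by omega⟩) ∧
      (x ≠ 0 →
        ((Finset.lcm (Finset.Icc 2 Δ) id : ℕ) : ℤ) ≤ |x ⟨0, by omega⟩| ∧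
        ∃ j, ((Finset.lcm (Finset.Icc 2 Δ) id : ℕ) : ℤ) ≤ |x j|)) ∧
    (∀ g : Fin Δ → ℤ, IsGraver (lowerBdMatrix Δ) g →
      ∃ j, ((Finset.lcm (Finset.Icc 2 Δ) id : ℕ) : ℤ) ≤ |g j|) := by
  have main : ∀ x : Fin Δ → ℤ, (lowerBdMatrix Δ).mulVec x = 0 →
      (∀ k : ℕ, 2 ≤ k → k ≤ Δ → (k : ℤ) ∣ x ⟨0, by omega⟩) ∧
      (((Finset.lcm (Finset.Icc 2 Δ) id : ℕ) : ℤ) ∣ x ⟨0, by omega⟩) ∧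
      (x ≠ 0 →
        ((Finset.lcm (Finset.Icc 2 Δ) id : ℕ) : ℤ) ≤ |x ⟨0, by omega⟩| ∧
        ∃ j, ((Finset.lcm (Finset.Icc 2 Δ) id : ℕ) : ℤ) ≤ |x j|) := by
    intro x hx
    -- each row gives (i+2) * x_{i+1} = x_0
    have hrow : ∀ i : Fin (Δ - 1),
        ((i : ℕ) + 2 : ℤ) * x ⟨(i : ℕ) + 1, by omega⟩ = x ⟨0, by omega⟩ := by
      intro i
      have := congrFun hx i
      rw [lowerBd_row_eq Δ hΔ x i] at this
      simp only [Pi.zero_apply] at this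
      linarith
    have hdvd : ∀ k : ℕ, 2 ≤ k → k ≤ Δ → (k : ℤ) ∣ x ⟨0, by omega⟩ := by
      intro k hk2 hkΔ
      have hk : k - 2 < Δ - 1 := by omega
      have := hrow ⟨k - 2, hk⟩
      refine ⟨x ⟨k - 2 + 1, by omega⟩, ?_⟩
      rw [← this]
      congr 1
      push_cast
      omega
    have hlcm : ((Finset.lcm (Finset.Icc 2 Δ) id : ℕ) : ℤ) ∣ x ⟨0, by omega⟩ := by
      rw [Int.natCast_dvd]
      apply Finset.lcm_dvd
      intro k hk
      rw [Finset.mem_Icc] at hk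
      have := hdvd k hk.1 hk.2
      rwa [Int.natCast_dvd] at this
    refine ⟨hdvd, hlcm, ?_⟩
    intro hx0
    have hx0' : x ⟨0, by omega⟩ ≠ 0 := by
      intro h0
      apply hx0
      funext j
      by_cases hj : (j : ℕ) = 0
      · have : j = ⟨0, by omega⟩ := Fin.ext hj
        rw [this, h0]; rfl
      · have hj1 : (j : ℕ) - 1 < Δ - 1 := by have := j.isLt; omega
        have := hrow ⟨(j : ℕ) - 1, hj1⟩
        rw [h0] at this
        have hj2 : (⟨(j : ℕ) - 1 + 1, by have := j.isLt; omega⟩ : Fin Δ) = j := by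
          apply Fin.ext; simp; omega
        rw [hj2] at this
        have hne : (((j : ℕ) - 1 : ℕ) + 2 : ℤ) ≠ 0 := by positivity
        have := mul_eq_zero.mp this
        simp only [Pi.zero_apply]
        tauto
    have hle : ((Finset.lcm (Finset.Icc 2 Δ) id : ℕ) : ℤ) ≤ |x ⟨0, by omega⟩| :=
      Int.le_of_dvd (abs_pos.mpr hx0') (hlcm.trans (self_dvd_abs _))
    exact ⟨hle, ⟨⟨0, by omega⟩, hle⟩⟩
  refine ⟨main, ?_⟩
  intro g hg
  exact ((main g hg.2.1).2.2 hg.1).2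
end

section
/- Let Δ ≥ 2, s ≥ 1, and set N = Δ^{s+1} − 1. For an integer z with 0 ≤ z ≤ N, let a_0(z), …, a_s(z) ∈ {0, …, Δ−1} be the digits of z in base Δ, so z = Σ_{i=0}^{s} a_i(z)·Δ^i. Let 𝒜' be the 2-stage stochastic constraint matrix with n = N − 1 diagonal blocks indexed by z ∈ {2, …, N}, one first-stage column, and second-stage blocks of s+1 columns, defined as follows: for each z, the first row of block z has entry −1 in the first-stage column and entries a_0(z), …, a_s(z) in the s+1 second-stage columns of block z; the remaining s rows of block z have entry 0 in the first-stage column and carry the matrix 𝒞 ∈ ℤ^{s×(s+1)} (𝒞_{i,i} = Δ, 𝒞_{i,i+1} = −1, other entries 0) in the second-stage columns of block z; all other entries of 𝒜' are 0. Then every x ∈ ℤ^{1+(N−1)(s+1)} with 𝒜'x = 0 satisfies z ∣ x_1 for every z ∈ {2, …, N}, where x_1 is the first-stage coordinate; hence every nonzero such x satisfies ‖x‖_∞ ≥ |x_1| ≥ lcm(2, …, Δ^{s+1}−1). In particular, every Graver element of the 2-stage stochastic matrix 𝒜' (which has r = s+1 rows per block and all entries bounded by Δ in absolute value) has ∞-norm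 at least lcm(2, …, Δ^{s+1}−1), which is doubly exponential of order 2^{Ω(Δ^s)}. -/
/-- The `i`-th digit of `z` in base `Δ`. -/
def digit (Δ z i : ℕ) : ℕ := z / Δ ^ i % Δ

/-- The 2-stage stochastic lower-bound matrix `𝒜'` with one first-stage column
and `N - 1 = Δ^{s+1} - 2` diagonal blocks indexed by `z ∈ {2, …, N}` (block
`w` corresponds to `z = w + 2`), each with `r = s + 1` rows and `s + 1`
second-stage columns.  Within block `z`, the first row (`p.2 = 0`) has `-1` in
the first-stage column and the base-`Δ` digits `a_0(z), …, a_s(z)` in the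
second-stage columns of block `z`; row `p.2 = i ≥ 1` carries row `i - 1` of
the matrix `𝒞` (entry `Δ` in column `i - 1`, entry `-1` in column `i`). -/
def A' (Δ s : ℕ) :
    Matrix (Fin (Δ ^ (s + 1) - 2) × Fin (s + 1))
      (Unit ⊕ Fin (Δ ^ (s + 1) - 2) × Fin (s + 1)) ℤ :=
  fun p q =>
    match q with
    | Sum.inl _ => if (p.2 : ℕ) = 0 then -1 else 0
    | Sum.inr (w, j) =>
        if w = p.1 then
          if (p.2 : ℕ) = 0 then (digit Δ ((p.1 : ℕ) + 2) (j : ℕ) : ℤ)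
          else if (j : ℕ) = (p.2 : ℕ) - 1 then (Δ : ℤ)
          else if (j : ℕ) = (p.2 : ℕ) then -1
          else 0
        else 0

theorem sum_range_digit_mul_pow (Δ z k : ℕ) :
    ∑ i ∈ Finset.range k, digit Δ z i * Δ ^ i = z % Δ ^ k := by
  induction k with
  | zero => simp [Nat.mod_one]
  | succ k ih => rw [Finset.sum_range_succ, ih, Nat.mod_pow_succ, digit, mul_comm]

theorem sum_digit_mul_pow_of_lt {Δ z k : ℕ} (hz : z < Δ ^ k) :
    ∑ i : Fin k, digit Δ z i * Δ ^ (i : ℕ) = z := by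
  rw [Fin.sum_univ_eq_sum_range (fun i ↦ digit Δ z i * Δ ^ i), sum_range_digit_mul_pow,
    Nat.mod_eq_of_lt hz]

theorem digit_lt {Δ : ℕ} (hΔ : 0 < Δ) (z i : ℕ) : digit Δ z i < Δ := Nat.mod_lt _ hΔ

theorem Int.natCast_finset_lcm_le_abs {S : Finset ℕ} {a : ℤ} (hS : ∀ z ∈ S, (z : ℤ) ∣ a)
    (ha : a ≠ 0) : ((S.lcm id : ℕ) : ℤ) ≤ |a| := by
  have hdvd : S.lcm id ∣ a.natAbs :=
    Finset.lcm_dvd fun z hz ↦ Int.natCast_dvd.mp (hS z hz)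
  rw [Int.abs_eq_natAbs]
  exact_mod_cast Nat.le_of_dvd (Int.natAbs_pos.mpr ha) hdvd

namespace A'

variable {Δ s : ℕ}

theorem add_two_lt_pow (w : Fin (Δ ^ (s + 1) - 2)) : (w : ℕ) + 2 < Δ ^ (s + 1) := by
  omega

theorem base_pos (w : Fin (Δ ^ (s + 1) - 2)) : 0 < Δ :=
  (Nat.pow_pos_iff.mp (by have := w.isLt; omega : 0 < Δ ^ (s + 1))).resolve_right s.succ_ne_zero

theorem abs_apply_le (p q) : |A' Δ s p q| ≤ Δ := by
  have hΔ : (1 : ℤ) ≤ Δ := by exact_mod_cast base_pos p.1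
  have hdigit (z i : ℕ) : (digit Δ z i : ℤ) ≤ Δ := by
    exact_mod_cast (digit_lt (base_pos p.1) z i).le
  rcases q with _ | ⟨w, j⟩ <;> simp only [A'] <;> split_ifs <;> simp [hdigit, hΔ]

variable (x : Unit ⊕ Fin (Δ ^ (s + 1) - 2) × Fin (s + 1) → ℤ)

theorem mulVec_apply_zero (w : Fin (Δ ^ (s + 1) - 2)) :
    (A' Δ s).mulVec x (w, 0) =
      -x (.inl ()) + ∑ j : Fin (s + 1), (digit Δ (w + 2) j : ℤ) * x (.inr (w, j)) := by
  simp [Matrix.mulVec, dotProduct, A', Fintype.sum_sum_type, Fintype.sum_prod_type]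

theorem mulVec_apply_succ (w : Fin (Δ ^ (s + 1) - 2)) (i : Fin s) :
    (A' Δ s).mulVec x (w, i.succ) =
      Δ * x (.inr (w, i.castSucc)) - x (.inr (w, i.succ)) := by
  simp only [Matrix.mulVec, dotProduct, A', Fin.val_succ, Nat.add_eq_zero_iff, one_ne_zero,
    and_false, ↓reduceIte, add_tsub_cancel_right, Int.reduceNeg, Fintype.sum_sum_type,
    Finset.univ_unique, PUnit.default_eq_unit, zero_mul, Finset.sum_const_zero, ite_mul, neg_mul,
    one_mul, Fintype.sum_prod_type, Finset.sum_ite_irrel, Finset.sum_ite_eq', Finset.mem_univ,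
    zero_add]
  rw [Fintype.sum_eq_add i.castSucc i.succ Fin.castSucc_lt_succ.ne]
  · simp [sub_eq_add_neg]
  · rintro j ⟨hj₁, hj₂⟩
    simp only [ne_eq, Fin.ext_iff, Fin.val_castSucc, Fin.val_succ] at hj₁ hj₂
    simp [hj₁, hj₂]

variable {x} (hx : (A' Δ s).mulVec x = 0)
include hx

theorem apply_inr_eq_pow_mul (w : Fin (Δ ^ (s + 1) - 2)) (j : Fin (s + 1)) :
    x (.inr (w, j)) = Δ ^ (j : ℕ) * x (.inr (w, 0)) := by
  induction j using Fin.induction with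
  | zero => simp
  | succ i ih =>
    have hrow := mulVec_apply_succ x w i
    rw [hx, Pi.zero_apply, ih, Fin.val_castSucc] at hrow
    rw [Fin.val_succ, pow_succ (Δ : ℤ)]
    linarith

theorem apply_inl_eq_mul (w : Fin (Δ ^ (s + 1) - 2)) :
    x (.inl ()) = ((w : ℕ) + 2 : ℤ) * x (.inr (w, 0)) := by
  have hdigits : ∑ j : Fin (s + 1), (digit Δ (w + 2) j : ℤ) * Δ ^ (j : ℕ) = (w : ℕ) + 2 := by
    exact_mod_cast sum_digit_mul_pow_of_lt (add_two_lt_pow w)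
  have hsum : ∑ j : Fin (s + 1), (digit Δ (w + 2) j : ℤ) * x (.inr (w, j)) =
      ((w : ℕ) + 2 : ℤ) * x (.inr (w, 0)) := by
    rw [← hdigits, Finset.sum_mul]
    refine Finset.sum_congr rfl fun j _ ↦ ?_
    rw [apply_inr_eq_pow_mul hx w j, mul_assoc]
  have hrow := mulVec_apply_zero x w
  rw [hx, Pi.zero_apply, hsum] at hrow
  linarith

theorem dvd_apply_inl {z : ℕ} (hz₂ : 2 ≤ z) (hz : z ≤ Δ ^ (s + 1) - 1) :
    (z : ℤ) ∣ x (.inl ()) := by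
  rw [apply_inl_eq_mul hx ⟨z - 2, by omega⟩]
  exact dvd_mul_of_dvd_left (by push_cast [Nat.cast_sub hz₂]; simp) _

theorem eq_zero_of_apply_inl_eq_zero (h : x (.inl ()) = 0) : x = 0 := by
  funext q
  rcases q with ⟨⟩ | ⟨w, j⟩
  · exact h
  · have hblock : x (.inr (w, 0)) = 0 := by
      have := apply_inl_eq_mul hx w
      rw [h, eq_comm, mul_eq_zero] at this
      exact this.resolve_left (by positivity)
    rw [apply_inr_eq_pow_mul hx w, hblock, mul_zero, Pi.zero_apply]

theorem lcm_le_abs_apply_inl (hne : x ≠ 0) :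
    (((Finset.Icc 2 (Δ ^ (s + 1) - 1)).lcm id : ℕ) : ℤ) ≤ |x (.inl ())| :=
  Int.natCast_finset_lcm_le_abs
    (fun _ hz ↦ dvd_apply_inl hx (Finset.mem_Icc.mp hz).1 (Finset.mem_Icc.mp hz).2)
    (mt (eq_zero_of_apply_inl_eq_zero hx) hne)

end A'

theorem twoStage_lower_bound_general (Δ s : ℕ) :
    (∀ p q, |A' Δ s p q| ≤ (Δ : ℤ)) ∧
    (∀ x : (Unit ⊕ Fin (Δ ^ (s + 1) - 2) × Fin (s + 1)) → ℤ,
      (A' Δ s).mulVec x = 0 →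
        (∀ z : ℕ, 2 ≤ z → z ≤ Δ ^ (s + 1) - 1 → (z : ℤ) ∣ x (Sum.inl ())) ∧
        (x ≠ 0 →
          ((Finset.lcm (Finset.Icc 2 (Δ ^ (s + 1) - 1)) id : ℕ) : ℤ)
              ≤ |x (Sum.inl ())| ∧
          ∃ q, ((Finset.lcm (Finset.Icc 2 (Δ ^ (s + 1) - 1)) id : ℕ) : ℤ) ≤ |x q|)) ∧
    (∀ g, IsGraver (A' Δ s) g →
      ∃ q, ((Finset.lcm (Finset.Icc 2 (Δ ^ (s + 1) - 1)) id : ℕ) : ℤ) ≤ |g q|) := by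
  refine ⟨A'.abs_apply_le, fun x hx ↦ ⟨fun _ ↦ A'.dvd_apply_inl hx, fun hne ↦ ?_⟩,
    fun g hg ↦ ?_⟩
  · exact ⟨A'.lcm_le_abs_apply_inl hx hne, _, A'.lcm_le_abs_apply_inl hx hne⟩
  · exact ⟨_, A'.lcm_le_abs_apply_inl hg.2.1 hg.1⟩

/-- all entries of `𝒜'` are bounded by `Δ` in absolute value;
every kernel element `x` of `𝒜'` has its first-stage coordinate divisible by
every `z ∈ {2, …, Δ^{s+1} - 1}`; hence every nonzero kernel element `x`
satisfies `‖x‖_∞ ≥ |x₁| ≥ lcm(2, …, Δ^{s+1} - 1)`, and in particular every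
Graver element of `𝒜'` has infinity norm at least `lcm(2, …, Δ^{s+1} - 1)`. -/
theorem twoStage_lower_bound (Δ s : ℕ) (hΔ : 2 ≤ Δ) (hs : 1 ≤ s) :
    (∀ p q, |A' Δ s p q| ≤ (Δ : ℤ)) ∧
    (∀ x : (Unit ⊕ Fin (Δ ^ (s + 1) - 2) × Fin (s + 1)) → ℤ,
      (A' Δ s).mulVec x = 0 →
        (∀ z : ℕ, 2 ≤ z → z ≤ Δ ^ (s + 1) - 1 → (z : ℤ) ∣ x (Sum.inl ())) ∧
        (x ≠ 0 →
          ((Finset.lcm (Finset.Icc 2 (Δ ^ (s + 1) - 1)) id : ℕ) : ℤ)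
              ≤ |x (Sum.inl ())| ∧
          ∃ q, ((Finset.lcm (Finset.Icc 2 (Δ ^ (s + 1) - 1)) id : ℕ) : ℤ) ≤ |x q|)) ∧
    (∀ g, IsGraver (A' Δ s) g →
      ∃ q, ((Finset.lcm (Finset.Icc 2 (Δ ^ (s + 1) - 1)) id : ℕ) : ℤ) ≤ |g q|) :=
  twoStage_lower_bound_general Δ s
end
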